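/- arXiv:1702.02622 — 8 statements merged into one kernel-verified Lean document; each statement's English description precedes it below -/
import Mathlib

section
/- Let 0 < α ≤ 1, λ > 0, t ≥ 0 and n be a natural number. Then the STFPP probability mass function with ν = 1 coincides with the time fractional Poisson probability mass function: ((-1)^n/n!) Σ_{k=0}^∞ [(-λ t^α)^k / Γ(kα+1)] · Γ(k+1)/Γ(k+1-n) = ((λ t^α)^n/n!) Σ_{k=0}^∞ ((k+n)!/k!) · (-λ t^α)^k / Γ((k+n)α+1). -/
open Real

/-!
For `ν = 1` the Gamma ratio `Γ(k+1)/Γ(k+1-n)` is the falling factorial `k(k-1)⋯(k-n+1)`, which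
vanishes for `k < n`. Shifting the summation index by `n` then turns the STFPP series term by term
into Laskin's series, the sign `(-1)ⁿ` cancelling against the one in `(-λtᵅ)ᵏ⁺ⁿ`.
-/

theorem tsum_nat_add_eq_tsum_of_eq_zero_of_lt {M : Type*} [AddCommMonoid M] [TopologicalSpace M]
    {f : ℕ → M} {n : ℕ} (hf : ∀ k < n, f k = 0) : ∑' k, f (k + n) = ∑' k, f k := by
  refine (add_left_injective n).tsum_eq fun k hk ↦ ⟨k - n, Nat.sub_add_cancel ?_⟩
  by_contra! hlt
  exact hk (hf k hlt)

theorem Nat.cast_descFactorial_add_self {K : Type*} [DivisionSemiring K] [CharZero K] (j n : ℕ) :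
    ((j + n).descFactorial n : K) = (j + n).factorial / j.factorial := by
  rw [eq_div_iff (Nat.cast_ne_zero.mpr j.factorial_ne_zero), ← Nat.cast_mul, mul_comm]
  exact_mod_cast by simpa using Nat.factorial_mul_descFactorial (le_add_self : n ≤ j + n)

/-- For `k < n` the denominator sits at a pole, where Mathlib's `Gamma` is `0`, so the quotient is
`0`: this matches the reciprocal-Gamma convention. -/
theorem Real.Gamma_natCast_add_one_div_Gamma_sub (k n : ℕ) :
    Gamma ((k : ℝ) + 1) / Gamma ((k : ℝ) + 1 - n) = k.descFactorial n := by
  rcases lt_or_ge k n with hlt | hle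
  · have : (k : ℝ) + 1 - n = -((n - (k + 1) : ℕ) : ℝ) := by push_cast [Nat.cast_sub hlt]; ring
    rw [this, Gamma_neg_nat_eq_zero, div_zero, Nat.descFactorial_eq_zero_iff_lt.mpr hlt,
      Nat.cast_zero]
  · have : (k : ℝ) + 1 - n = ((k - n : ℕ) : ℝ) + 1 := by push_cast [Nat.cast_sub hle]; ring
    rw [this, Gamma_nat_eq_factorial, Gamma_nat_eq_factorial, div_eq_iff (by positivity),
      ← Nat.cast_mul, mul_comm, Nat.factorial_mul_descFactorial hle]

theorem tsum_mul_descFactorial {K : Type*} [Field K] [CharZero K] [TopologicalSpace K]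
    (f : ℕ → K) (n : ℕ) :
    ∑' k, f k * k.descFactorial n = ∑' j, ((j + n).factorial / j.factorial : K) * f (j + n) := by
  rw [← tsum_nat_add_eq_tsum_of_eq_zero_of_lt fun k hk ↦ by
    rw [Nat.descFactorial_eq_zero_iff_lt.mpr hk, Nat.cast_zero, mul_zero]]
  exact tsum_congr fun j ↦ by rw [mul_comm, Nat.cast_descFactorial_add_self]

theorem stfpp_nu_one_eq_tfpp_general (α lam t : ℝ) (n : ℕ) :
    ((-1) ^ n / n.factorial) * ∑' k : ℕ,
        (-lam * t ^ α) ^ k / Real.Gamma ((k : ℝ) * α + 1) *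
          (Real.Gamma ((k : ℝ) + 1) / Real.Gamma ((k : ℝ) + 1 - n)) =
      ((lam * t ^ α) ^ n / n.factorial) * ∑' k : ℕ,
        (((k + n).factorial : ℝ) / k.factorial) * (-lam * t ^ α) ^ k /
          Real.Gamma (((k : ℝ) + n) * α + 1) := by
  rw [neg_mul]
  generalize lam * t ^ α = x
  simp only [Gamma_natCast_add_one_div_Gamma_sub]
  rw [tsum_mul_descFactorial (fun k : ℕ ↦ (-x) ^ k / Gamma (k * α + 1)) n, ← tsum_mul_left,
    ← tsum_mul_left]
  refine tsum_congr fun j ↦ ?_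
  have hsign : ((-1) ^ n * (-x) ^ n : ℝ) = x ^ n := by rw [← mul_pow, neg_one_mul, neg_neg]
  rw [pow_add]
  push_cast
  linear_combination
    ((j + n).factorial / (n.factorial * j.factorial) * (-x) ^ j / Gamma ((j + n) * α + 1)) * hsign

theorem stfpp_nu_one_eq_tfpp (α lam t : ℝ) (hα0 : 0 < α) (hα1 : α ≤ 1)
    (hlam : 0 < lam) (ht : 0 ≤ t) (n : ℕ) :
    ((-1) ^ n / n.factorial) * ∑' k : ℕ,
        (-lam * t ^ α) ^ k / Real.Gamma ((k : ℝ) * α + 1) *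
          (Real.Gamma ((k : ℝ) + 1) / Real.Gamma ((k : ℝ) + 1 - n)) =
      ((lam * t ^ α) ^ n / n.factorial) * ∑' k : ℕ,
        (((k + n).factorial : ℝ) / k.factorial) * (-lam * t ^ α) ^ k /
          Real.Gamma (((k : ℝ) + n) * α + 1) :=
  stfpp_nu_one_eq_tfpp_general α lam t n
end

section
/- Let 0 < α < 1 and λ > 0. For every natural number n, the function t ↦ p^α(n,t) := ((λ t^α)^n/n!) Σ_{k=0}^∞ ((k+n)!/k!) · (-λ t^α)^k / Γ((k+n)α+1) satisfies, for all t > 0, the Caputo fractional equation ∂^α_t p^α(n,t) = -λ (p^α(n,t) - p^α(n-1,t)) (with the convention p^α(-1,t) = 0), together with the initial conditions p^α(0,0) = 1 and p^α(n,0) = 0 for n ≥ 1. -/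
open Real

/-- Caputo fractional derivative of order `0 < α < 1`. -/
noncomputable def caputo (α : ℝ) (f : ℝ → ℝ) (t : ℝ) : ℝ :=
  (1 / Real.Gamma (1 - α)) * ∫ s in (0:ℝ)..t, (t - s) ^ (-α) * deriv f s

/-- State probabilities of the time fractional Poisson process (Laskin's form). -/
noncomputable def pTF (α lam : ℝ) (n : ℕ) (t : ℝ) : ℝ :=
  ((lam * t ^ α) ^ n / n.factorial) * ∑' k : ℕ,
    (((k + n).factorial : ℝ) / k.factorial) * (-(lam * t ^ α)) ^ k /
      Real.Gamma (((k : ℝ) + n) * α + 1)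

/-!
Expanding the powers, `pTF α λ n t = ∑ₘ C(m, n) λⁿ (-λ)^(m-n) t^(mα) / Γ(mα + 1)`. A Beta integral
shows that the Caputo derivative of `t^((m+1)α) / Γ((m+1)α + 1)` is `t^(mα) / Γ(mα + 1)`, and it may
be taken term by term because the coefficients grow at most geometrically while, by the
log-convexity of `Γ`, `Γ(mα + q)` outgrows every geometric sequence. So the derivative shifts the
coefficient sequence by one, and Pascal's rule `C(m+1, n) = C(m, n) + C(m, n-1)` rewrites the
shifted coefficients as `-λ` times the difference of those of `p(n)` and `p(n-1)`.
-/

open Filter Topology MeasureTheory Set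

theorem Gamma_mul_rpow_le_Gamma_add {α x : ℝ} (hα0 : 0 < α) (hα1 : α < 1) (hx : 1 < x + α) :
    Gamma x * (x + α - 1) ^ α ≤ Gamma (x + α) := by
  have hx₁ : 0 < x + α - 1 := by linarith
  have hΓ : 0 < Gamma (x + α) := Gamma_pos_of_pos (by linarith)
  have hrec : Gamma (x + α) = (x + α - 1) * Gamma (x + α - 1) := by
    simpa using Gamma_add_one hx₁.ne'
  have hconv := Gamma_mul_add_mul_le_rpow_Gamma_mul_rpow_Gamma hx₁ (by linarith : 0 < x + α)
    hα0 (sub_pos.2 hα1) (add_sub_cancel α 1)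
  rw [show α * (x + α - 1) + (1 - α) * (x + α) = x by ring] at hconv
  calc Gamma x * (x + α - 1) ^ α
      ≤ Gamma (x + α - 1) ^ α * Gamma (x + α) ^ (1 - α) * (x + α - 1) ^ α := by gcongr
    _ = ((x + α - 1) * Gamma (x + α - 1)) ^ α * Gamma (x + α) ^ (1 - α) := by
      rw [mul_rpow hx₁.le (Gamma_pos_of_pos hx₁).le]; ring
    _ = Gamma (x + α) ^ α * Gamma (x + α) ^ (1 - α) := by rw [← hrec]
    _ = Gamma (x + α) := by rw [← rpow_add hΓ, add_sub_cancel, rpow_one]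

theorem summable_pow_div_Gamma {α q : ℝ} (hα0 : 0 < α) (hα1 : α < 1) (hq : 0 < q) (R : ℝ) :
    Summable fun m : ℕ => R ^ m / Gamma (m * α + q) := by
  have hlin : Tendsto (fun m : ℕ => (m : ℝ) * α + q) atTop atTop :=
    tendsto_atTop_add_const_right _ q (tendsto_natCast_atTop_atTop.atTop_mul_const hα0)
  have hlarge : ∀ᶠ m : ℕ in atTop, 1 < (m : ℝ) * α + q + α ∧
      2 * |R| ≤ ((m : ℝ) * α + q + α - 1) ^ α := by
    refine ((tendsto_atTop_add_const_right _ α hlin).eventually_gt_atTop 1).and ?_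
    exact ((tendsto_rpow_atTop hα0).comp
      (tendsto_atTop_add_const_right _ (α - 1) hlin)).eventually_ge_atTop _ |>.mono
      fun m hm => by simpa [add_sub_assoc] using hm
  have hnorm : ∀ m : ℕ, ‖R ^ m / Gamma (m * α + q)‖ = |R| ^ m / Gamma (m * α + q) := fun m => by
    rw [norm_div, norm_pow, norm_eq_abs, norm_of_nonneg (Gamma_pos_of_pos (by positivity)).le]
  refine summable_of_ratio_norm_eventually_le (r := 1 / 2) (by norm_num) ?_
  filter_upwards [hlarge] with m ⟨hm₁, hm₂⟩
  have hΓ : 0 < Gamma (m * α + q) := Gamma_pos_of_pos (by positivity)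
  have hstep := Gamma_mul_rpow_le_Gamma_add hα0 hα1 hm₁
  have hgap : 0 < ((m : ℝ) * α + q + α - 1) ^ α := rpow_pos_of_pos (by linarith) α
  rw [hnorm, hnorm, Nat.cast_succ, show ((m : ℝ) + 1) * α + q = m * α + q + α by ring]
  calc |R| ^ (m + 1) / Gamma (m * α + q + α)
      ≤ |R| ^ (m + 1) / (Gamma (m * α + q) * (m * α + q + α - 1) ^ α) :=
        div_le_div_of_nonneg_left (by positivity) (by positivity) hstep
    _ = |R| ^ m / Gamma (m * α + q) * (|R| / (m * α + q + α - 1) ^ α) := by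
        rw [pow_succ]; field_simp
    _ ≤ |R| ^ m / Gamma (m * α + q) * (1 / 2) := by
        refine mul_le_mul_of_nonneg_left ?_ (by positivity)
        rw [div_le_iff₀ hgap]
        linarith
    _ = 1 / 2 * (|R| ^ m / Gamma (m * α + q)) := mul_comm _ _

theorem integral_rpow_mul_sub_rpow {u v t : ℝ} (hu : 0 < u) (hv : 0 < v) (ht : 0 < t) :
    ∫ s in 0..t, s ^ (u - 1) * (t - s) ^ (v - 1) =
      Gamma u * Gamma v / Gamma (u + v) * t ^ (u + v - 1) := by
  have hbeta := Complex.betaIntegral_scaled u v ht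
  rw [Complex.betaIntegral_eq_Gamma_mul_div _ _ (by simpa) (by simpa)] at hbeta
  apply Complex.ofReal_injective
  rw [← intervalIntegral.integral_ofReal]
  calc ∫ s in 0..t, ((s ^ (u - 1) * (t - s) ^ (v - 1) : ℝ) : ℂ)
      = ∫ s in 0..t, (s : ℂ) ^ ((u : ℂ) - 1) * ((t : ℂ) - s) ^ ((v : ℂ) - 1) := by
        refine intervalIntegral.integral_congr fun s hs => ?_
        rw [uIcc_of_le ht.le] at hs
        push_cast
        rw [Complex.ofReal_cpow hs.1, Complex.ofReal_cpow (sub_nonneg.2 hs.2)]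
        push_cast
        ring
    _ = _ := by
        have hΓ : Complex.Gamma (u + v) = Gamma (u + v) := by
          rw [← Complex.ofReal_add, Complex.Gamma_ofReal]
        rw [hbeta, hΓ]
        push_cast [Complex.ofReal_cpow ht.le, Complex.Gamma_ofReal]
        ring

theorem intervalIntegrable_rpow_mul_sub_rpow {u v t : ℝ} (hu : 0 < u) (hv : 0 < v) (ht : 0 < t) :
    IntervalIntegrable (fun s => s ^ (u - 1) * (t - s) ^ (v - 1)) volume 0 t := by
  refine intervalIntegral.intervalIntegrable_of_integral_ne_zero ?_
  rw [integral_rpow_mul_sub_rpow hu hv ht]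
  have := Gamma_pos_of_pos hu
  have := Gamma_pos_of_pos hv
  have := Gamma_pos_of_pos (add_pos hu hv)
  positivity

noncomputable def fracMonomial (α : ℝ) (m : ℕ) (t : ℝ) : ℝ :=
  t ^ (m * α) / Gamma (m * α + 1)

section fracMonomial

variable {α : ℝ}

@[simp] theorem fracMonomial_zero (t : ℝ) : fracMonomial α 0 t = 1 := by
  simp [fracMonomial]

theorem fracMonomial_succ_apply_zero (hα : 0 < α) (m : ℕ) : fracMonomial α (m + 1) 0 = 0 := by
  rw [fracMonomial, zero_rpow (by positivity), zero_div]

theorem hasDerivAt_fracMonomial_succ (hα : 0 < α) (m : ℕ) {t : ℝ} (ht : 0 < t) :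
    HasDerivAt (fracMonomial α (m + 1))
      (t ^ ((m + 1) * α - 1) / Gamma ((m + 1) * α)) t := by
  have hb : 0 < ((m : ℝ) + 1) * α := by positivity
  unfold fracMonomial
  push_cast
  refine ((hasDerivAt_rpow_const (p := (m + 1) * α) (Or.inl ht.ne')).div_const
    (Gamma ((m + 1) * α + 1))).congr_deriv ?_
  rw [Gamma_add_one hb.ne']
  field_simp [(Gamma_pos_of_pos hb).ne']

theorem integral_sub_rpow_mul_deriv_fracMonomial (hα0 : 0 < α) (hα1 : α < 1) (m : ℕ) {t : ℝ}
    (ht : 0 < t) :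
    ∫ s in 0..t, (t - s) ^ (-α) * (s ^ ((m + 1) * α - 1) / Gamma ((m + 1) * α)) =
      Gamma (1 - α) * fracMonomial α m t := by
  have hb : 0 < ((m : ℝ) + 1) * α := by positivity
  have hΓ := (Gamma_pos_of_pos hb).ne'
  calc ∫ s in 0..t, (t - s) ^ (-α) * (s ^ ((m + 1) * α - 1) / Gamma ((m + 1) * α))
      = (∫ s in 0..t, s ^ ((m + 1) * α - 1) * (t - s) ^ ((1 - α) - 1)) / Gamma ((m + 1) * α) := by
        rw [← intervalIntegral.integral_div]
        congr 1 with s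
        rw [sub_sub_cancel_left]
        ring
    _ = Gamma (1 - α) * fracMonomial α m t := by
        rw [integral_rpow_mul_sub_rpow hb (by linarith) ht, fracMonomial,
          show ((m : ℝ) + 1) * α + (1 - α) = m * α + 1 by ring,
          show (m : ℝ) * α + 1 - 1 = m * α by ring]
        field_simp

theorem intervalIntegrable_sub_rpow_mul_deriv_fracMonomial (hα0 : 0 < α) (hα1 : α < 1) (m : ℕ)
    {t : ℝ} (ht : 0 < t) :
    IntervalIntegrable (fun s => (t - s) ^ (-α) * (s ^ ((m + 1) * α - 1) / Gamma ((m + 1) * α)))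
      volume 0 t := by
  have hb : 0 < ((m : ℝ) + 1) * α := by positivity
  refine ((intervalIntegrable_rpow_mul_sub_rpow hb (by linarith : 0 < 1 - α) ht).div_const
    (Gamma ((m + 1) * α))).congr fun s _ => ?_
  simp only [sub_sub_cancel_left]
  ring

theorem fracMonomial_nonneg (hα : 0 ≤ α) (m : ℕ) {t : ℝ} (ht : 0 ≤ t) : 0 ≤ fracMonomial α m t :=
  div_nonneg (rpow_nonneg ht _) (Gamma_pos_of_pos (by positivity)).le

theorem deriv_fracMonomial_succ_le (hα0 : 0 < α) (hα1 : α < 1) (m : ℕ) {a b s : ℝ} (ha : 0 < a)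
    (hs : s ∈ Icc a b) :
    s ^ ((m + 1) * α - 1) / Gamma ((m + 1) * α) ≤
      (b ^ α) ^ m * a ^ (α - 1) / Gamma (m * α + α) := by
  have hs0 : 0 < s := ha.trans_le hs.1
  have hsplit : s ^ (((m : ℝ) + 1) * α - 1) = (s ^ α) ^ m * s ^ (α - 1) := by
    rw [← rpow_natCast, ← rpow_mul hs0.le, ← rpow_add hs0]
    ring_nf
  rw [hsplit, show ((m : ℝ) + 1) * α = m * α + α by ring]
  refine div_le_div_of_nonneg_right (mul_le_mul ?_ ?_ (by positivity)
    (pow_nonneg (rpow_nonneg (hs0.le.trans hs.2) _) _))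
    (Gamma_pos_of_pos (by positivity)).le
  · exact pow_le_pow_left₀ (by positivity) (rpow_le_rpow hs0.le hs.2 hα0.le) m
  · exact rpow_le_rpow_of_nonpos ha hs.1 (by linarith)

end fracMonomial

theorem caputo_congr {α : ℝ} {f g : ℝ → ℝ} (hfg : EqOn f g (Ioi 0)) {t : ℝ} (ht : 0 ≤ t) :
    caputo α f t = caputo α g t := by
  unfold caputo
  congr 1
  refine intervalIntegral.integral_congr_ae (ae_of_all _ fun s hs => ?_)
  rw [uIoc_of_le ht] at hs
  rw [(hfg.eventuallyEq_of_mem (Ioi_mem_nhds hs.1)).deriv_eq]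

noncomputable def fracSeries (α : ℝ) (c : ℕ → ℝ) (t : ℝ) : ℝ :=
  ∑' m, c m * fracMonomial α m t

section fracSeries

variable {α C K : ℝ} {c : ℕ → ℝ}

theorem summable_mul_fracMonomial (hα0 : 0 < α) (hα1 : α < 1) (hc : ∀ m, |c m| ≤ C * K ^ m)
    {t : ℝ} (ht : 0 ≤ t) : Summable fun m => c m * fracMonomial α m t := by
  refine .of_norm_bounded ((summable_pow_div_Gamma hα0 hα1 one_pos (K * t ^ α)).mul_left C)
    fun m => ?_
  calc ‖c m * fracMonomial α m t‖ = |c m| * fracMonomial α m t := by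
        rw [norm_mul, norm_of_nonneg (fracMonomial_nonneg hα0.le m ht), norm_eq_abs]
    _ ≤ C * K ^ m * fracMonomial α m t :=
        mul_le_mul_of_nonneg_right (hc m) (fracMonomial_nonneg hα0.le m ht)
    _ = C * ((K * t ^ α) ^ m / Gamma (m * α + 1)) := by
        rw [fracMonomial, mul_comm (m : ℝ) α, rpow_mul ht, rpow_natCast]
        ring

theorem fracSeries_apply_zero (hα : 0 < α) (c : ℕ → ℝ) : fracSeries α c 0 = c 0 := by
  rw [fracSeries, tsum_eq_single 0 fun m hm => ?_, fracMonomial_zero, mul_one]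
  obtain ⟨k, rfl⟩ := Nat.exists_eq_succ_of_ne_zero hm
  rw [fracMonomial_succ_apply_zero hα, mul_zero]

theorem fracSeries_const_mul (a : ℝ) (c : ℕ → ℝ) (t : ℝ) :
    fracSeries α (fun m => a * c m) t = a * fracSeries α c t := by
  simp only [fracSeries, mul_assoc, tsum_mul_left]

theorem fracSeries_sub {d : ℕ → ℝ} {D L : ℝ} (hα0 : 0 < α) (hα1 : α < 1)
    (hc : ∀ m, |c m| ≤ C * K ^ m) (hd : ∀ m, |d m| ≤ D * L ^ m) {t : ℝ} (ht : 0 ≤ t) :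
    fracSeries α (fun m => c m - d m) t = fracSeries α c t - fracSeries α d t := by
  simp only [fracSeries, sub_mul]
  exact (summable_mul_fracMonomial hα0 hα1 hc ht).tsum_sub
    (summable_mul_fracMonomial hα0 hα1 hd ht)

theorem abs_succ_le_mul_pow (hc : ∀ m, |c m| ≤ C * K ^ m) (m : ℕ) :
    |c (m + 1)| ≤ (C * K) * K ^ m := by
  rw [mul_assoc, ← pow_succ']
  exact hc (m + 1)

theorem hasDerivAt_fracSeries (hα0 : 0 < α) (hα1 : α < 1) (hc : ∀ m, |c m| ≤ C * K ^ m)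
    {s : ℝ} (hs : 0 < s) :
    HasDerivAt (fracSeries α c)
      (∑' m : ℕ, c (m + 1) * (s ^ ((m + 1) * α - 1) / Gamma ((m + 1) * α))) s := by
  have hU : Ioo (s / 2) (2 * s) ∈ 𝓝 s := Ioo_mem_nhds (by linarith) (by linarith)
  have hdom : Summable fun m : ℕ =>
      C * K * ((K * (2 * s) ^ α) ^ m / Gamma (m * α + α)) * (s / 2) ^ (α - 1) :=
    ((summable_pow_div_Gamma hα0 hα1 hα0 _).mul_left (C * K)).mul_right _
  have htail : HasDerivAt (fun z => ∑' m : ℕ, c (m + 1) * fracMonomial α (m + 1) z)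
      (∑' m : ℕ, c (m + 1) * (s ^ ((m + 1) * α - 1) / Gamma ((m + 1) * α))) s := by
    refine hasDerivAt_tsum_of_isPreconnected hdom isOpen_Ioo isPreconnected_Ioo
      (fun m z hz => ((hasDerivAt_fracMonomial_succ hα0 m
        (by linarith [hz.1])).const_mul _)) (fun m z hz => ?_) (mem_of_mem_nhds hU)
      ((summable_nat_add_iff 1).2 (summable_mul_fracMonomial hα0 hα1 hc hs.le))
      (mem_of_mem_nhds hU)
    have hz0 : 0 ≤ z := by linarith [hz.1]
    have hderiv_nonneg : 0 ≤ z ^ ((m + 1) * α - 1) / Gamma ((m + 1) * α) :=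
      div_nonneg (rpow_nonneg hz0 _) (Gamma_pos_of_pos (by positivity)).le
    calc ‖c (m + 1) * (z ^ ((m + 1) * α - 1) / Gamma ((m + 1) * α))‖
        = |c (m + 1)| * (z ^ ((m + 1) * α - 1) / Gamma ((m + 1) * α)) := by
          rw [norm_mul, norm_of_nonneg hderiv_nonneg, norm_eq_abs]
      _ ≤ C * K * K ^ m * (((2 * s) ^ α) ^ m * (s / 2) ^ (α - 1) / Gamma (m * α + α)) :=
          mul_le_mul (abs_succ_le_mul_pow hc m)
            (deriv_fracMonomial_succ_le hα0 hα1 m (by positivity) (Ioo_subset_Icc_self hz))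
            hderiv_nonneg ((abs_nonneg _).trans (abs_succ_le_mul_pow hc m))
      _ = _ := by ring
  have hsplit : fracSeries α c =ᶠ[𝓝 s]
      fun z => c 0 + ∑' m : ℕ, c (m + 1) * fracMonomial α (m + 1) z := by
    filter_upwards [Ioi_mem_nhds hs] with z hz
    rw [fracSeries, (summable_mul_fracMonomial hα0 hα1 hc hz.le).tsum_eq_zero_add,
      fracMonomial_zero, mul_one]
  exact (htail.const_add (c 0)).congr_of_eventuallyEq hsplit

theorem caputo_fracSeries (hα0 : 0 < α) (hα1 : α < 1) (hc : ∀ m, |c m| ≤ C * K ^ m) {t : ℝ}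
    (ht : 0 < t) : caputo α (fracSeries α c) t = fracSeries α (fun m => c (m + 1)) t := by
  set F : ℕ → ℝ → ℝ := fun m s =>
    c (m + 1) * ((t - s) ^ (-α) * (s ^ ((m + 1) * α - 1) / Gamma ((m + 1) * α)))
  have hseries : ∀ s ∈ Ioc 0 t, (t - s) ^ (-α) * deriv (fracSeries α c) s = ∑' m, F m s := by
    intro s hs
    rw [(hasDerivAt_fracSeries hα0 hα1 hc hs.1).deriv, ← tsum_mul_left]
    exact tsum_congr fun m => by ring
  have hint : ∀ m, Integrable (F m) (volume.restrict (Ioc 0 t)) := fun m =>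
    ((intervalIntegrable_sub_rpow_mul_deriv_fracMonomial hα0 hα1 m ht).1.const_mul _)
  have hnorm : ∀ m, ∫ s in Ioc 0 t, ‖F m s‖ =
      |c (m + 1)| * (Gamma (1 - α) * fracMonomial α m t) := by
    intro m
    rw [← intervalIntegral.integral_of_le ht.le,
      ← integral_sub_rpow_mul_deriv_fracMonomial hα0 hα1 m ht,
      ← intervalIntegral.integral_const_mul]
    refine intervalIntegral.integral_congr fun s hs => ?_
    rw [uIcc_of_le ht.le] at hs
    have : 0 ≤ (t - s) ^ (-α) * (s ^ ((m + 1) * α - 1) / Gamma ((m + 1) * α)) :=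
      mul_nonneg (rpow_nonneg (sub_nonneg.2 hs.2) _)
        (div_nonneg (rpow_nonneg hs.1 _) (Gamma_pos_of_pos (by positivity)).le)
    rw [norm_mul, norm_of_nonneg this, norm_eq_abs]
  have hsum : Summable fun m => ∫ s in Ioc 0 t, ‖F m s‖ := by
    simp_rw [hnorm]
    refine ((summable_mul_fracMonomial hα0 hα1 (abs_succ_le_mul_pow hc) ht.le).abs.mul_left
      (Gamma (1 - α))).congr fun m => ?_
    rw [abs_mul, abs_of_nonneg (fracMonomial_nonneg hα0.le m ht.le)]
    ring
  have hΓ : Gamma (1 - α) ≠ 0 := (Gamma_pos_of_pos (by linarith)).ne'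
  calc caputo α (fracSeries α c) t = 1 / Gamma (1 - α) * ∫ s in Ioc 0 t, ∑' m, F m s := by
        rw [caputo, intervalIntegral.integral_of_le ht.le,
          setIntegral_congr_fun measurableSet_Ioc hseries]
    _ = 1 / Gamma (1 - α) * ∑' m, ∫ s in Ioc 0 t, F m s := by
        rw [integral_tsum_of_summable_integral_norm hint hsum]
    _ = fracSeries α (fun m => c (m + 1)) t := by
        have hterm : ∀ m, ∫ s in Ioc 0 t, F m s =
            c (m + 1) * (Gamma (1 - α) * fracMonomial α m t) := by
          intro m
          rw [← intervalIntegral.integral_of_le ht.le, intervalIntegral.integral_const_mul,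
            integral_sub_rpow_mul_deriv_fracMonomial hα0 hα1 m ht]
        simp_rw [hterm, fracSeries, ← tsum_mul_left]
        refine tsum_congr fun m => ?_
        field_simp

end fracSeries

-- `m.choose n = 0` for `m < n`, so the truncated subtraction `m - n` is harmless.
def tfppCoeff (lam : ℝ) (n m : ℕ) : ℝ :=
  m.choose n * lam ^ n * (-lam) ^ (m - n)

theorem abs_tfppCoeff_le (lam : ℝ) (n m : ℕ) : |tfppCoeff lam n m| ≤ (2 * |lam|) ^ m := by
  rcases le_or_gt n m with h | h
  · rw [tfppCoeff, abs_mul, abs_mul, abs_pow, abs_pow, abs_neg, Nat.abs_cast, mul_assoc,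
      ← pow_add, Nat.add_sub_cancel' h, mul_pow]
    gcongr
    exact_mod_cast Nat.choose_le_two_pow m n
  · simp [tfppCoeff, Nat.choose_eq_zero_of_lt h]

theorem tfppCoeff_zero_succ (lam : ℝ) (m : ℕ) :
    tfppCoeff lam 0 (m + 1) = -lam * tfppCoeff lam 0 m := by
  simp only [tfppCoeff, Nat.choose_zero_right, Nat.sub_zero, pow_succ]
  ring

theorem tfppCoeff_succ_succ (lam : ℝ) (n m : ℕ) :
    tfppCoeff lam (n + 1) (m + 1) = -lam * (tfppCoeff lam (n + 1) m - tfppCoeff lam n m) := by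
  rcases Nat.lt_or_ge m n with h | h
  · simp [tfppCoeff, Nat.choose_eq_zero_of_lt h, Nat.choose_eq_zero_of_lt (h.trans n.lt_succ_self),
      Nat.choose_eq_zero_of_lt (Nat.succ_lt_succ h)]
  · obtain ⟨j, rfl⟩ := Nat.exists_eq_add_of_le h
    rcases j with _ | j
    · simp [tfppCoeff, pow_succ]
      ring
    · simp only [tfppCoeff, Nat.choose_succ_succ', show n + (j + 1) + 1 - (n + 1) = j + 1 by omega,
        show n + (j + 1) - (n + 1) = j by omega, show n + (j + 1) - n = j + 1 by omega, pow_succ]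
      push_cast
      ring

theorem pTF_eq_fracSeries (α lam : ℝ) (n : ℕ) {t : ℝ} (ht : 0 ≤ t) :
    pTF α lam n t = fracSeries α (tfppCoeff lam n) t := by
  have hsupp : Function.support (fun m => tfppCoeff lam n m * fracMonomial α m t) ⊆
      range (· + n) := fun m hm =>
    ⟨m - n, Nat.sub_add_cancel <| not_lt.1 fun h =>
      hm (by simp [tfppCoeff, Nat.choose_eq_zero_of_lt h])⟩
  rw [fracSeries, ← (add_left_injective n).tsum_eq hsupp, pTF, ← tsum_mul_left]
  refine tsum_congr fun k => ?_
  have hpow : t ^ (((k + n : ℕ) : ℝ) * α) = (t ^ α) ^ (k + n) := by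
    rw [mul_comm, rpow_mul ht, rpow_natCast]
  have hchoose : ((k + n).choose n : ℝ) = (k + n).factorial / (k.factorial * n.factorial) := by
    rw [eq_div_iff (by positivity), ← Nat.add_choose_mul_factorial_mul_factorial]
    push_cast
    ring
  rw [tfppCoeff, fracMonomial, hpow, Nat.add_sub_cancel, hchoose]
  push_cast
  field_simp
  ring

theorem tfpp_solves_caputo_dde_general (α lam : ℝ) (hα0 : 0 < α) (hα1 : α < 1)
    (n : ℕ) :
    (∀ t : ℝ, 0 < t →
      caputo α (fun s => pTF α lam n s) t =
        -lam * (pTF α lam n t - if n = 0 then 0 else pTF α lam (n - 1) t)) ∧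
    pTF α lam 0 0 = 1 ∧ (∀ n' : ℕ, 1 ≤ n' → pTF α lam n' 0 = 0) := by
  have hbound (n m : ℕ) : |tfppCoeff lam n m| ≤ 1 * (2 * |lam|) ^ m :=
    (abs_tfppCoeff_le lam n m).trans_eq (one_mul _).symm
  refine ⟨fun t ht => ?_, ?_, fun n' hn' => ?_⟩
  · rw [caputo_congr (fun s hs => pTF_eq_fracSeries α lam n (le_of_lt hs)) ht.le,
      caputo_fracSeries hα0 hα1 (hbound n) ht]
    rcases n with _ | n
    · simp_rw [tfppCoeff_zero_succ, fracSeries_const_mul, pTF_eq_fracSeries α lam 0 ht.le]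
      simp
    · simp_rw [tfppCoeff_succ_succ, fracSeries_const_mul,
        fracSeries_sub hα0 hα1 (hbound _) (hbound _) ht.le, pTF_eq_fracSeries α lam _ ht.le]
      simp
  · rw [pTF_eq_fracSeries α lam 0 le_rfl, fracSeries_apply_zero hα0]
    simp [tfppCoeff]
  · rw [pTF_eq_fracSeries α lam n' le_rfl, fracSeries_apply_zero hα0]
    simp [tfppCoeff, Nat.choose_eq_zero_of_lt hn']

theorem tfpp_solves_caputo_dde (α lam : ℝ) (hα0 : 0 < α) (hα1 : α < 1)
    (hlam : 0 < lam) (n : ℕ) :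
    (∀ t : ℝ, 0 < t →
      caputo α (fun s => pTF α lam n s) t =
        -lam * (pTF α lam n t - if n = 0 then 0 else pTF α lam (n - 1) t)) ∧
    pTF α lam 0 0 = 1 ∧ (∀ n' : ℕ, 1 ≤ n' → pTF α lam n' 0 = 0) :=
  tfpp_solves_caputo_dde_general α lam hα0 hα1 n
end

section
/- Let 0 < ν ≤ 1 and λ > 0. For every natural number n, the function t ↦ p_ν(n,t) := ((-1)^n/n!) Σ_{k=0}^∞ [(-λ^ν t)^k / k!] · Γ(kν+1)/Γ(kν+1-n) is differentiable on (0,∞) and satisfies, for all t > 0, the equation d/dt p_ν(n,t) = -λ^ν · Σ_{r=0}^{n} (-1)^r ((ν)_r / r!) · p_ν(n-r, t), together with the initial conditions p_ν(0,0) = 1 and p_ν(n,0) = 0 for n ≥ 1. -/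
open Real Finset

/-- Falling factorial `(x)_r = x(x-1)⋯(x-r+1)`. -/
noncomputable def fallFac (x : ℝ) (r : ℕ) : ℝ := ∏ i ∈ Finset.range r, (x - i)

/-- State probabilities of the space fractional Poisson process (SFPP). -/
noncomputable def pSF (ν lam : ℝ) (n : ℕ) (t : ℝ) : ℝ :=
  ((-1) ^ n / n.factorial) * ∑' k : ℕ,
    (-(lam ^ ν) * t) ^ k / k.factorial *
      (Real.Gamma ((k : ℝ) * ν + 1) / Real.Gamma ((k : ℝ) * ν + 1 - n))

/-! For `x ≥ 0` one has `Γ(x+1)/Γ(x+1-n) = (x)_n`, so `p_ν(n, ·)` is the entire power series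
`∑ₖ (-1)ⁿ C(kν, n) (-λ^ν t)ᵏ / k!` with generalized binomial coefficients `C(x, n) = (x)_n / n!`.
Termwise differentiation shifts `k` to `k + 1`, and the Chu–Vandermonde identity
`C(ν + kν, n) = ∑ᵣ C(ν, r) C(kν, n - r)` splits the new coefficient into the convolution on the
right-hand side of the equation. -/

lemma fallFac_succ (x : ℝ) (n : ℕ) : fallFac x (n + 1) = fallFac x n * (x - n) :=
  prod_range_succ _ _

lemma fallFac_div_factorial (x : ℝ) (n : ℕ) : fallFac x n / n.factorial = Ring.choose x n := by
  rw [Ring.choose_eq_smul, ← Polynomial.aeval_eq_smeval, Polynomial.aeval_def,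
    Polynomial.eval₂_eq_eval_map, descPochhammer_map, descPochhammer_eval_eq_prod_range,
    smul_eq_mul, inv_mul_eq_div, fallFac]

/-- Mathlib's `Gamma` is `0` at the poles, matching the reciprocal-Gamma convention: if
`x + 1 - n` is a pole then `x ∈ {0, …, n - 1}` and both sides vanish. -/
lemma Gamma_div_Gamma_sub_nat {x : ℝ} (hx : Gamma (x + 1) ≠ 0) (n : ℕ) :
    Gamma (x + 1) / Gamma (x + 1 - n) = fallFac x n := by
  induction n with
  | zero => simp [fallFac, hx]
  | succ n ih =>
    have hsucc : x + 1 - ↑(n + 1) = x - n := by push_cast; ring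
    rw [fallFac_succ, ← ih, hsucc]
    by_cases hxn : x - n = 0
    · rw [hxn, Gamma_zero]; simp
    · have h : Gamma (x + 1 - n) = (x - n) * Gamma (x - n) := by
        rw [← Gamma_add_one hxn]; ring_nf
      rw [h]; field_simp

lemma abs_fallFac_le {x : ℝ} (hx : 0 ≤ x) (n : ℕ) : |fallFac x n| ≤ (x + n) ^ n := by
  rw [fallFac, abs_prod, ← card_range n, ← prod_const, card_range]
  refine prod_le_prod (fun i _ => abs_nonneg _) fun i hi => abs_le.2 ⟨?_, ?_⟩
  · have : (i : ℝ) ≤ n := by exact_mod_cast (mem_range.1 hi).le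
    linarith
  · have : (0 : ℝ) ≤ i := i.cast_nonneg
    linarith

lemma abs_choose_le_exp {x : ℝ} (hx : 0 ≤ x) (n : ℕ) : |Ring.choose x n| ≤ exp (x + n) := by
  rw [← fallFac_div_factorial, abs_div, Nat.abs_cast]
  calc |fallFac x n| / n.factorial ≤ (x + n) ^ n / n.factorial := by
        gcongr; exact abs_fallFac_le hx n
    _ ≤ exp (x + n) := Real.pow_div_factorial_le_exp _ (by positivity) n

section PowerSeries

variable {a : ℕ → ℝ}

lemma summable_mul_pow (ha : ∀ r : ℝ, Summable fun k => ‖a k‖ * r ^ k) (t : ℝ) :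
    Summable fun k => a k * t ^ k :=
  .of_norm_bounded (ha |t|) fun k => by rw [norm_mul, norm_pow, Real.norm_eq_abs t]

lemma hasDerivAt_tsum_mul_pow (ha : ∀ r : ℝ, Summable fun k => ‖a k‖ * r ^ k) (t : ℝ) :
    HasDerivAt (fun s => ∑' k, a k * s ^ k) (∑' k, (k + 1) * a (k + 1) * t ^ k) t := by
  set T := |t| + 1
  have hT : 1 ≤ T := le_add_of_nonneg_left (abs_nonneg t)
  have ht : t ∈ Set.Ioo (-T) T := abs_lt.1 (lt_add_one _)
  have hbound : ∀ k, ∀ y ∈ Set.Ioo (-T) T,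
      ‖a k * (k * y ^ (k - 1))‖ ≤ ‖a k‖ * (2 * T) ^ k := by
    intro k y hy
    have hk : (k : ℝ) ≤ 2 ^ k := by exact_mod_cast k.lt_two_pow_self.le
    have hy : ‖y‖ ^ (k - 1) ≤ T ^ k :=
      (pow_le_pow_left₀ (norm_nonneg y) (abs_lt.2 hy).le _).trans
        (pow_le_pow_right₀ hT (k.sub_le 1))
    rw [norm_mul, norm_mul, norm_pow, RCLike.norm_natCast, mul_pow]
    gcongr
  have hderiv := hasDerivAt_tsum_of_isPreconnected (ha (2 * T)) isOpen_Ioo isPreconnected_Ioo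
    (fun k y _ => (hasDerivAt_pow k y).const_mul (a k)) hbound ht (summable_mul_pow ha t) ht
  have hsummable : Summable fun k => a k * (k * t ^ (k - 1)) :=
    .of_norm_bounded (ha (2 * T)) fun k => hbound k t ht
  refine hderiv.congr_deriv ?_
  rw [hsummable.tsum_eq_zero_add]
  simp only [Nat.cast_zero, zero_mul, mul_zero, zero_add, Nat.cast_add_one, Nat.add_sub_cancel]
  exact tsum_congr fun k => by ring

end PowerSeries

noncomputable def sfppCoeff (ν L : ℝ) (n k : ℕ) : ℝ :=
  (-1) ^ n * Ring.choose ((k : ℝ) * ν) n * ((-L) ^ k / k.factorial)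

lemma pSF_eq_tsum {ν : ℝ} (hν : 0 ≤ ν) (lam : ℝ) (n : ℕ) (t : ℝ) :
    pSF ν lam n t = ∑' k, sfppCoeff ν (lam ^ ν) n k * t ^ k := by
  rw [pSF, ← tsum_mul_left]
  refine tsum_congr fun k => ?_
  rw [Gamma_div_Gamma_sub_nat (Gamma_pos_of_pos (by positivity)).ne', sfppCoeff,
    ← fallFac_div_factorial, mul_pow]
  ring

lemma summable_norm_sfppCoeff_mul_pow {ν : ℝ} (hν : 0 ≤ ν) (L : ℝ) (n : ℕ) (r : ℝ) :
    Summable fun k => ‖sfppCoeff ν L n k‖ * r ^ k := by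
  refine .of_norm_bounded ((summable_pow_div_factorial (exp ν * |L| * |r|)).mul_left (exp n))
    fun k => ?_
  have hchoose := abs_choose_le_exp (mul_nonneg k.cast_nonneg hν) n
  rw [exp_add, exp_nat_mul] at hchoose
  simp only [sfppCoeff, norm_mul, norm_pow, norm_div, norm_neg, norm_one, Real.norm_eq_abs,
    abs_abs, one_pow, one_mul, Nat.abs_cast]
  calc |Ring.choose (k * ν) n| * (|L| ^ k / k.factorial) * |r| ^ k
      ≤ exp ν ^ k * exp n * (|L| ^ k / k.factorial) * |r| ^ k := by gcongr
    _ = exp n * ((exp ν * |L| * |r|) ^ k / k.factorial) := by ring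

lemma sfppCoeff_succ (ν L : ℝ) (n k : ℕ) :
    ((k : ℝ) + 1) * sfppCoeff ν L n (k + 1) =
      -L * ∑ r ∈ range (n + 1), (-1) ^ r * Ring.choose ν r * sfppCoeff ν L (n - r) k := by
  have hchoose : Ring.choose (((k + 1 : ℕ) : ℝ) * ν) n =
      ∑ r ∈ range (n + 1), Ring.choose ν r * Ring.choose ((k : ℝ) * ν) (n - r) := by
    rw [show ((k + 1 : ℕ) : ℝ) * ν = ν + k * ν by push_cast; ring,
      Ring.add_choose_eq _ (Commute.all _ _),
      Nat.sum_antidiagonal_eq_sum_range_succ (fun i j => Ring.choose ν i * Ring.choose (k * ν) j)]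
  simp only [sfppCoeff, hchoose, mul_sum, sum_mul]
  refine sum_congr rfl fun r hr => ?_
  rw [← pow_mul_pow_sub (-1 : ℝ) (Nat.lt_succ_iff.1 (mem_range.1 hr)), Nat.factorial_succ,
    pow_succ]
  push_cast
  field_simp

lemma hasDerivAt_pSF {ν : ℝ} (hν : 0 ≤ ν) (lam : ℝ) (n : ℕ) (t : ℝ) :
    HasDerivAt (fun s => pSF ν lam n s)
      (-(lam ^ ν) * ∑ r ∈ range (n + 1),
        (-1) ^ r * (fallFac ν r / r.factorial) * pSF ν lam (n - r) t) t := by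
  have hsummable := summable_norm_sfppCoeff_mul_pow hν (lam ^ ν)
  simp_rw [pSF_eq_tsum hν lam]
  refine (hasDerivAt_tsum_mul_pow (hsummable n) t).congr_deriv ?_
  simp_rw [sfppCoeff_succ, fallFac_div_factorial]
  calc ∑' k, -lam ^ ν * (∑ r ∈ range (n + 1),
          (-1) ^ r * Ring.choose ν r * sfppCoeff ν (lam ^ ν) (n - r) k) * t ^ k
      = ∑' k, ∑ r ∈ range (n + 1), -lam ^ ν * ((-1) ^ r * Ring.choose ν r) *
          (sfppCoeff ν (lam ^ ν) (n - r) k * t ^ k) := by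
        simp only [mul_sum, sum_mul]
        exact tsum_congr fun k => sum_congr rfl fun r _ => by ring
    _ = _ := by
        rw [Summable.tsum_finsetSum fun r _ =>
          (summable_mul_pow (hsummable (n - r)) t).mul_left _, mul_sum]
        simp only [tsum_mul_left, mul_assoc]

lemma pSF_at_zero {ν : ℝ} (hν : 0 ≤ ν) (lam : ℝ) (n : ℕ) :
    pSF ν lam n 0 = if n = 0 then 1 else 0 := by
  rw [pSF_eq_tsum hν, tsum_eq_single 0 fun k hk => by simp [hk]]
  by_cases hn : n = 0 <;> simp [sfppCoeff, Ring.choose_zero_ite, hn]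

theorem sfpp_solves_dde_general (ν lam : ℝ) (hν0 : 0 < ν) (n : ℕ) :
    (∀ t : ℝ, 0 < t →
      HasDerivAt (fun s => pSF ν lam n s)
        (-(lam ^ ν) * ∑ r ∈ Finset.range (n + 1),
          (-1) ^ r * (fallFac ν r / r.factorial) * pSF ν lam (n - r) t) t) ∧
    pSF ν lam 0 0 = 1 ∧ (∀ n' : ℕ, 1 ≤ n' → pSF ν lam n' 0 = 0) :=
  ⟨fun t _ => hasDerivAt_pSF hν0.le lam n t, by simp [pSF_at_zero hν0.le],
    fun n' hn' => by simp [pSF_at_zero hν0.le, Nat.one_le_iff_ne_zero.1 hn']⟩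

theorem sfpp_solves_dde (ν lam : ℝ) (hν0 : 0 < ν) (hν1 : ν ≤ 1) (hlam : 0 < lam)
    (n : ℕ) :
    (∀ t : ℝ, 0 < t →
      HasDerivAt (fun s => pSF ν lam n s)
        (-(lam ^ ν) * ∑ r ∈ Finset.range (n + 1),
          (-1) ^ r * (fallFac ν r / r.factorial) * pSF ν lam (n - r) t) t) ∧
    pSF ν lam 0 0 = 1 ∧ (∀ n' : ℕ, 1 ≤ n' → pSF ν lam n' 0 = 0) :=
  sfpp_solves_dde_general ν lam hν0 n
end

section
/- Let α > 0 and let β, γ, ρ be real numbers with ρ > 0 and ρ > β - γ. Then for every t > 0, the Saigo fractional integral of the power function s^{ρ-1} satisfies (t^{-α-β}/Γ(α)) ∫_0^t (t-s)^{α-1} ₂F₁(α+β, -γ; α; 1 - s/t) s^{ρ-1} ds = [Γ(ρ)Γ(ρ-β+γ) / (Γ(ρ-β)Γ(ρ+α+γ))] · t^{ρ-β-1}. -/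
/-!
Substituting `s = t (1 - u)` turns the Saigo integral into
`t^(ρ-β-1) / Γ(α) · ∫₀¹ u^(α-1) ₂F₁(α+β, -γ; α; u) (1-u)^(ρ-1) du`. Integrating the series
termwise against Euler's Beta integral gives `B(α, ρ) · ₂F₁(α+β, -γ; α+ρ; 1)`, and Gauss's summation
theorem `₂F₁(a, b; c; 1) = Γ(c) Γ(c-a-b) / (Γ(c-a) Γ(c-b))` for `a + b < c` finishes.

For Gauss's theorem write `F(c) = ₂F₁(a, b; c; 1)`. Termwise telescoping gives the contiguous
relation `c (c-a-b) F(c) = (c-a) (c-b) F(c+1)`; iterating it,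
`F(c) = (c-a)ₙ (c-b)ₙ / ((c)ₙ (c-a-b)ₙ) · F(c+n)`. Here `F(c+n) → 1` by dominated convergence, and
Euler's limit formula `Γ(x) = lim nˣ n! / (x)ₙ₊₁` sends the Pochhammer ratio to the Gamma quotient.
The same formula shows that the `k`-th coefficient of `F(c)` is `O(k^(a+b-c-1))`, which gives
absolute convergence at `z = 1`.
-/

open Real Finset

/-- Rising factorial `(x)^{(k)} = x(x+1)⋯(x+k-1)`. -/
noncomputable def risingFac (x : ℝ) (k : ℕ) : ℝ := ∏ i ∈ Finset.range k, (x + i)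

/-- Gauss hypergeometric function `₂F₁(a,b;c;z)`. -/
noncomputable def hyp2F1 (a b c z : ℝ) : ℝ :=
  ∑' k : ℕ, (risingFac a k * risingFac b k / risingFac c k) * z ^ k / k.factorial

/-- Saigo fractional integral operator `I^{α,β,γ}_t`. -/
noncomputable def saigoI (α β γ : ℝ) (f : ℝ → ℝ) (t : ℝ) : ℝ :=
  (t ^ (-α - β) / Real.Gamma α) *
    ∫ s in (0:ℝ)..t, (t - s) ^ (α - 1) * hyp2F1 (α + β) (-γ) α (1 - s / t) * f s

open Filter Topology Asymptotics Set MeasureTheory ProbabilityTheory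
open scoped Nat

lemma risingFac_zero (x : ℝ) : risingFac x 0 = 1 := prod_range_zero _

lemma risingFac_succ (x : ℝ) (k : ℕ) : risingFac x (k + 1) = risingFac x k * (x + k) :=
  prod_range_succ _ k

lemma risingFac_succ' (x : ℝ) (k : ℕ) : risingFac x (k + 1) = x * risingFac (x + 1) k := by
  rw [risingFac, prod_range_succ']
  simp only [Nat.cast_add, Nat.cast_one, Nat.cast_zero, add_zero, risingFac]
  rw [mul_comm]
  congr 1
  exact prod_congr rfl fun i _ => by ring

lemma risingFac_pos {x : ℝ} (hx : 0 < x) (k : ℕ) : 0 < risingFac x k :=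
  prod_pos fun _ _ => by positivity

lemma risingFac_le_risingFac {x y : ℝ} (hx : 0 < x) (hxy : x ≤ y) (k : ℕ) :
    risingFac x k ≤ risingFac y k :=
  prod_le_prod (fun _ _ => by positivity) fun _ _ => by linarith

lemma Gamma_add_nat_eq_risingFac_mul {x : ℝ} (hx : 0 < x) (k : ℕ) :
    Gamma (x + k) = risingFac x k * Gamma x := by
  induction k with
  | zero => simp [risingFac_zero]
  | succ k ih =>
    rw [Nat.cast_succ, ← add_assoc, Gamma_add_one (by positivity), ih, risingFac_succ]
    ring

-- Valid for every `x`: if `(x)ₙ₊₁ = 0`, then `GammaSeq x n = 0` too and `0⁻¹ = 0`.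
lemma risingFac_succ_eq_GammaSeq (x : ℝ) {n : ℕ} (hn : n ≠ 0) :
    risingFac x (n + 1) = n ^ x * n ! * (GammaSeq x n)⁻¹ := by
  have : (n : ℝ) ^ x * n ! ≠ 0 := by positivity
  rw [GammaSeq, inv_div, mul_div_cancel₀ _ this, risingFac]

lemma GammaSeq_neg_nat_eventually_eq_zero {m : ℕ} : ∀ᶠ n in atTop, GammaSeq (-m) n = 0 := by
  filter_upwards [eventually_ge_atTop m] with n hn
  rw [GammaSeq, prod_eq_zero (mem_range.2 (Nat.lt_succ_of_le hn)) (by ring), div_zero]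

-- At a pole `x = -m`, `GammaSeq x n` vanishes for `n ≥ m` while `(Γ x)⁻¹ = 0⁻¹ = 0`.
lemma tendsto_inv_GammaSeq (x : ℝ) :
    Tendsto (fun n => (GammaSeq x n)⁻¹) atTop (𝓝 (Gamma x)⁻¹) := by
  by_cases hx : Gamma x = 0
  · obtain ⟨m, rfl⟩ := (Gamma_eq_zero_iff x).1 hx
    rw [hx, inv_zero]
    exact tendsto_const_nhds.congr' <|
      (GammaSeq_neg_nat_eventually_eq_zero (m := m)).mono fun n hn => by simp [hn]
  · exact (GammaSeq_tendsto_Gamma x).inv₀ hx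

noncomputable def hyp2F1Coeff (a b c : ℝ) (k : ℕ) : ℝ :=
  risingFac a k * risingFac b k / risingFac c k / k !

lemma hyp2F1_eq_tsum (a b c z : ℝ) : hyp2F1 a b c z = ∑' k, hyp2F1Coeff a b c k * z ^ k :=
  tsum_congr fun k => by rw [hyp2F1Coeff]; ring

lemma hyp2F1_one_eq_tsum (a b c : ℝ) : hyp2F1 a b c 1 = ∑' k, hyp2F1Coeff a b c k := by
  simp [hyp2F1_eq_tsum]

lemma hyp2F1Coeff_succ_eq_GammaSeq (a b c : ℝ) {n : ℕ} (hn : n ≠ 0) :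
    hyp2F1Coeff a b c (n + 1) =
      n ^ (a + b - c) / (n + 1) * (GammaSeq c n * (GammaSeq a n)⁻¹ * (GammaSeq b n)⁻¹) := by
  have hn' : (0 : ℝ) < n := by positivity
  rw [hyp2F1Coeff, risingFac_succ_eq_GammaSeq a hn, risingFac_succ_eq_GammaSeq b hn,
    risingFac_succ_eq_GammaSeq c hn, Nat.factorial_succ, rpow_sub hn', rpow_add hn']
  have : (n ! : ℝ) ≠ 0 := by positivity
  have : (n : ℝ) ^ c ≠ 0 := by positivity
  push_cast
  field_simp

lemma tendsto_GammaSeq_mul_inv (a b c : ℝ) :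
    Tendsto (fun n => GammaSeq c n * (GammaSeq a n)⁻¹ * (GammaSeq b n)⁻¹) atTop
      (𝓝 (Gamma c * (Gamma a)⁻¹ * (Gamma b)⁻¹)) :=
  ((GammaSeq_tendsto_Gamma c).mul (tendsto_inv_GammaSeq a)).mul (tendsto_inv_GammaSeq b)

lemma hyp2F1Coeff_succ_isBigO (a b c : ℝ) :
    (fun n : ℕ => hyp2F1Coeff a b c (n + 1)) =O[atTop]
      (fun n : ℕ => (n : ℝ) ^ (a + b - c - 1)) := by
  have hpow : (fun n : ℕ => (n : ℝ) ^ (a + b - c) / (n + 1)) =O[atTop]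
      (fun n : ℕ => (n : ℝ) ^ (a + b - c - 1)) := by
    refine IsBigO.of_bound 1 ?_
    filter_upwards [eventually_gt_atTop 0] with n hn
    have hn' : (0 : ℝ) < n := by exact_mod_cast hn
    rw [norm_div, Real.norm_of_nonneg (by positivity), Real.norm_of_nonneg (by positivity),
      Real.norm_of_nonneg (by positivity), one_mul, rpow_sub_one hn'.ne']
    exact div_le_div_of_nonneg_left (by positivity) hn' (by linarith)
  have := hpow.mul ((tendsto_GammaSeq_mul_inv a b c).isBigO_one (F := ℝ))
  simp only [mul_one] at this
  refine this.congr' ?_ EventuallyEq.rfl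
  filter_upwards [eventually_ne_atTop 0] with n hn
  exact (hyp2F1Coeff_succ_eq_GammaSeq a b c hn).symm

lemma summable_abs_hyp2F1Coeff {a b c : ℝ} (h : a + b < c) :
    Summable fun k => |hyp2F1Coeff a b c k| := by
  rw [← summable_nat_add_iff 1]
  exact summable_of_isBigO_nat (summable_nat_rpow.2 (by linarith))
    (hyp2F1Coeff_succ_isBigO a b c).abs_left

lemma tendsto_natCast_mul_hyp2F1Coeff {a b c : ℝ} (h : a + b < c) :
    Tendsto (fun k : ℕ => k * hyp2F1Coeff a b c k) atTop (𝓝 0) := by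
  rw [← tendsto_add_atTop_iff_nat 1]
  have hpow : Tendsto (fun n : ℕ => (n : ℝ) ^ (a + b - c)) atTop (𝓝 0) := by
    have h := tendsto_rpow_neg_atTop (y := c - a - b) (by linarith)
    rw [show -(c - a - b) = a + b - c by ring] at h
    exact h.comp tendsto_natCast_atTop_atTop
  have := hpow.mul (tendsto_GammaSeq_mul_inv a b c)
  rw [zero_mul] at this
  refine this.congr' ?_
  filter_upwards [eventually_ne_atTop 0] with n hn
  rw [hyp2F1Coeff_succ_eq_GammaSeq a b c hn]
  push_cast
  field_simp

lemma tsum_sub_succ_eq_of_tendsto {G : Type*} [AddCommGroup G] [TopologicalSpace G]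
    [IsTopologicalAddGroup G] [T2Space G] {f : ℕ → G} {l : G} (hf : Tendsto f atTop (𝓝 l))
    (hs : Summable fun n => f n - f (n + 1)) : ∑' n, (f n - f (n + 1)) = f 0 - l := by
  refine tendsto_nhds_unique hs.hasSum.tendsto_sum_nat ?_
  simpa only [sum_range_sub'] using tendsto_const_nhds.sub hf

lemma hyp2F1Coeff_contiguous {c : ℝ} (hc : 0 < c) (a b : ℝ) (k : ℕ) :
    c * (c - a - b) * hyp2F1Coeff a b c k - (c - a) * (c - b) * hyp2F1Coeff a b (c + 1) k =
      c * k * hyp2F1Coeff a b c k - c * (k + 1) * hyp2F1Coeff a b c (k + 1) := by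
  have hshift : risingFac (c + 1) k = risingFac c k * (c + k) / c := by
    rw [eq_div_iff hc.ne', mul_comm, ← risingFac_succ', risingFac_succ]
  have := risingFac_pos hc k
  simp only [hyp2F1Coeff, hshift, risingFac_succ, Nat.factorial_succ]
  field_simp
  push_cast
  ring

lemma hyp2F1_one_contiguous {a b c : ℝ} (hc : 0 < c) (h : a + b < c) :
    c * (c - a - b) * hyp2F1 a b c 1 = (c - a) * (c - b) * hyp2F1 a b (c + 1) 1 := by
  set f : ℕ → ℝ := fun k => c * (k * hyp2F1Coeff a b c k)
  have hterm : ∀ k, c * (c - a - b) * hyp2F1Coeff a b c k -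
      (c - a) * (c - b) * hyp2F1Coeff a b (c + 1) k = f k - f (k + 1) := fun k => by
    rw [hyp2F1Coeff_contiguous hc]
    simp only [f]
    push_cast
    ring
  have hs := (summable_abs_hyp2F1Coeff h).of_abs.mul_left (c * (c - a - b))
  have hs' := (summable_abs_hyp2F1Coeff (a := a) (b := b) (c := c + 1) (by linarith)).of_abs
    |>.mul_left ((c - a) * (c - b))
  have htel := tsum_sub_succ_eq_of_tendsto (f := f)
    (by simpa using (tendsto_natCast_mul_hyp2F1Coeff h).const_mul c)
    (by simpa only [hterm] using hs.sub hs')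
  rw [← sub_eq_zero, hyp2F1_one_eq_tsum, hyp2F1_one_eq_tsum, ← tsum_mul_left, ← tsum_mul_left,
    ← hs.tsum_sub hs', tsum_congr hterm, htel]
  simp [f]

lemma hyp2F1_one_eq_mul_add_nat {a b c : ℝ} (hc : 0 < c) (h : a + b < c) (n : ℕ) :
    hyp2F1 a b c 1 = risingFac (c - a) n * risingFac (c - b) n /
      (risingFac c n * risingFac (c - a - b) n) * hyp2F1 a b (c + n) 1 := by
  induction n with
  | zero => simp [risingFac_zero]
  | succ n ih =>
    have hstep := hyp2F1_one_contiguous (a := a) (b := b) (c := c + n) (by positivity)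
      (by linarith [(n.cast_nonneg : (0 : ℝ) ≤ n)])
    have := risingFac_pos hc n
    have := risingFac_pos (by linarith : 0 < c - a - b) n
    have : 0 < c - a - b + n := by linarith [(n.cast_nonneg : (0 : ℝ) ≤ n)]
    rw [ih, risingFac_succ, risingFac_succ, risingFac_succ, risingFac_succ, Nat.cast_succ,
      ← add_assoc]
    field_simp
    linear_combination (risingFac (c - a) n * risingFac (c - b) n) * hstep

lemma abs_hyp2F1Coeff_le_of_le {c c' : ℝ} (hc : 0 < c) (hcc' : c ≤ c') (a b : ℝ) (k : ℕ) :
    |hyp2F1Coeff a b c' k| ≤ |hyp2F1Coeff a b c k| := by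
  have := risingFac_pos hc k
  simp only [hyp2F1Coeff, abs_div, Nat.abs_cast, abs_of_pos (risingFac_pos (hc.trans_le hcc') k),
    abs_of_pos this]
  gcongr
  exact risingFac_le_risingFac hc hcc' k

lemma tendsto_inv_risingFac_add_nat (c : ℝ) (k : ℕ) :
    Tendsto (fun n : ℕ => (risingFac (c + n) k)⁻¹) atTop (𝓝 (0 ^ k)) := by
  simp only [risingFac, ← prod_inv_distrib]
  rw [show (0 : ℝ) ^ k = ∏ _i ∈ range k, 0 by simp]
  refine tendsto_finsetProd _ fun i _ => (tendsto_inv_atTop_zero (𝕜 := ℝ)).comp ?_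
  exact tendsto_atTop_add_const_right _ _
    (tendsto_atTop_add_const_left _ _ (tendsto_natCast_atTop_atTop (R := ℝ)))

lemma tendsto_hyp2F1_one_add_nat {a b c : ℝ} (hc : 0 < c) (h : a + b < c) :
    Tendsto (fun n : ℕ => hyp2F1 a b (c + n) 1) atTop (𝓝 1) := by
  have hlim : ∀ k, Tendsto (fun n : ℕ => hyp2F1Coeff a b (c + n) k) atTop
      (𝓝 (risingFac a k * risingFac b k * 0 ^ k / k !)) := fun k => by
    simp only [hyp2F1Coeff, div_eq_mul_inv _ (risingFac _ k)]
    exact ((tendsto_inv_risingFac_add_nat c k).const_mul _).div_const _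
  have hbound : ∀ᶠ n : ℕ in atTop, ∀ k, ‖hyp2F1Coeff a b (c + n) k‖ ≤ |hyp2F1Coeff a b c k| :=
    Eventually.of_forall fun n k =>
      abs_hyp2F1Coeff_le_of_le hc (le_add_of_nonneg_right n.cast_nonneg) a b k
  have := tendsto_tsum_of_dominated_convergence (summable_abs_hyp2F1Coeff h) hlim hbound
  have hsum : ∑' k, risingFac a k * risingFac b k * 0 ^ k / k ! = 1 := by
    rw [tsum_eq_single 0 fun k hk => by simp [zero_pow hk]]
    simp [risingFac_zero]
  simpa only [hyp2F1_one_eq_tsum, hsum] using this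

lemma risingFac_ratio_eq_GammaSeq {x y z w : ℝ} (h : x + y = z + w) {n : ℕ} (hn : n ≠ 0) :
    risingFac x (n + 1) * risingFac y (n + 1) / (risingFac z (n + 1) * risingFac w (n + 1)) =
      GammaSeq z n * GammaSeq w n * (GammaSeq x n)⁻¹ * (GammaSeq y n)⁻¹ := by
  have hn' : (0 : ℝ) < n := by positivity
  have hpow : (n : ℝ) ^ x * n ^ y = n ^ z * n ^ w := by rw [← rpow_add hn', h, rpow_add hn']
  have : (n : ℝ) ^ z * n ^ w * n ! ^ 2 ≠ 0 := by positivity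
  simp only [risingFac_succ_eq_GammaSeq _ hn, div_eq_mul_inv, mul_inv, inv_inv]
  calc _ = (n : ℝ) ^ x * n ^ y * n ! ^ 2 / (n ^ z * n ^ w * n ! ^ 2) *
        (GammaSeq z n * GammaSeq w n * (GammaSeq x n)⁻¹ * (GammaSeq y n)⁻¹) := by ring
    _ = _ := by rw [hpow, div_self this, one_mul]

theorem hyp2F1_one_eq_Gamma {a b c : ℝ} (hc : 0 < c) (h : a + b < c) :
    hyp2F1 a b c 1 = Gamma c * Gamma (c - a - b) / (Gamma (c - a) * Gamma (c - b)) := by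
  have hratio : Tendsto (fun n : ℕ => risingFac (c - a) (n + 1) * risingFac (c - b) (n + 1) /
      (risingFac c (n + 1) * risingFac (c - a - b) (n + 1))) atTop
      (𝓝 (Gamma c * Gamma (c - a - b) / (Gamma (c - a) * Gamma (c - b)))) := by
    have := (((GammaSeq_tendsto_Gamma c).mul (GammaSeq_tendsto_Gamma (c - a - b))).mul
      (tendsto_inv_GammaSeq (c - a))).mul (tendsto_inv_GammaSeq (c - b))
    rw [div_eq_mul_inv, mul_inv, ← mul_assoc]
    refine this.congr' ?_
    filter_upwards [eventually_ne_atTop 0] with n hn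
    exact (risingFac_ratio_eq_GammaSeq (by ring) hn).symm
  have hlim := hratio.mul ((tendsto_hyp2F1_one_add_nat hc h).comp (tendsto_add_atTop_nat 1))
  rw [mul_one] at hlim
  refine tendsto_nhds_unique (tendsto_const_nhds.congr fun n => ?_) hlim
  simpa using hyp2F1_one_eq_mul_add_nat hc h (n + 1)

lemma lintegral_rpow_mul_one_sub_rpow {x y : ℝ} (hx : 0 < x) (hy : 0 < y) :
    ∫⁻ u in Ioo (0 : ℝ) 1, ENNReal.ofReal (u ^ (x - 1) * (1 - u) ^ (y - 1)) =
      ENNReal.ofReal (Gamma x * Gamma y / Gamma (x + y)) := by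
  have hB := beta_pos hx hy
  have h := lintegral_betaPDF_eq_one hx hy
  simp_rw [lintegral_betaPDF, mul_assoc, ENNReal.ofReal_mul (one_div_pos.2 hB).le] at h
  rw [lintegral_const_mul' _ _ ENNReal.ofReal_ne_top, mul_comm] at h
  rw [ENNReal.eq_inv_of_mul_eq_one_left h, one_div, ENNReal.ofReal_inv_of_pos hB, inv_inv, beta]

lemma rpow_mul_one_sub_rpow_nonneg_ae (x y : ℝ) :
    ∀ᵐ u ∂(volume.restrict (Ioo (0 : ℝ) 1)), 0 ≤ u ^ (x - 1) * (1 - u) ^ (y - 1) :=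
  ae_restrict_of_forall_mem measurableSet_Ioo fun u hu => by
    have := hu.1; have := hu.2; positivity

lemma integrableOn_rpow_mul_one_sub_rpow {x y : ℝ} (hx : 0 < x) (hy : 0 < y) :
    IntegrableOn (fun u : ℝ => u ^ (x - 1) * (1 - u) ^ (y - 1)) (Ioo 0 1) := by
  refine ⟨by fun_prop, (hasFiniteIntegral_iff_ofReal (rpow_mul_one_sub_rpow_nonneg_ae x y)).2 ?_⟩
  rw [lintegral_rpow_mul_one_sub_rpow hx hy]
  exact ENNReal.ofReal_lt_top

lemma integral_rpow_mul_one_sub_rpow {x y : ℝ} (hx : 0 < x) (hy : 0 < y) :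
    ∫ u in Ioo (0 : ℝ) 1, u ^ (x - 1) * (1 - u) ^ (y - 1) = Gamma x * Gamma y / Gamma (x + y) := by
  rw [integral_eq_lintegral_of_nonneg_ae (rpow_mul_one_sub_rpow_nonneg_ae x y)
    (integrableOn_rpow_mul_one_sub_rpow hx hy).aestronglyMeasurable,
    lintegral_rpow_mul_one_sub_rpow hx hy]
  exact ENNReal.toReal_ofReal (beta_pos hx hy).le

lemma hyp2F1Coeff_mul_beta {α ρ : ℝ} (hα : 0 < α) (hρ : 0 < ρ) (a b : ℝ) (k : ℕ) :
    hyp2F1Coeff a b α k * (Gamma (α + k) * Gamma ρ / Gamma (α + k + ρ)) =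
      Gamma α * Gamma ρ / Gamma (α + ρ) * hyp2F1Coeff a b (α + ρ) k := by
  have hαρ : 0 < α + ρ := by positivity
  rw [Gamma_add_nat_eq_risingFac_mul hα, add_right_comm, Gamma_add_nat_eq_risingFac_mul hαρ]
  have := risingFac_pos hα k
  have := risingFac_pos hαρ k
  have := Gamma_pos_of_pos hα
  have := Gamma_pos_of_pos hαρ
  simp only [hyp2F1Coeff]
  field_simp

lemma integral_rpow_mul_hyp2F1_mul_rpow {a b α ρ : ℝ} (hα : 0 < α) (hρ : 0 < ρ)
    (h : a + b < α + ρ) :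
    ∫ u in (0 : ℝ)..1, u ^ (α - 1) * hyp2F1 a b α u * (1 - u) ^ (ρ - 1) =
      Gamma α * Gamma ρ / Gamma (α + ρ) * hyp2F1 a b (α + ρ) 1 := by
  set C := Gamma α * Gamma ρ / Gamma (α + ρ)
  have hC : 0 < C := beta_pos hα hρ
  set F : ℕ → ℝ → ℝ := fun k u => hyp2F1Coeff a b α k * (u ^ (α + k - 1) * (1 - u) ^ (ρ - 1))
  have hαk : ∀ k : ℕ, 0 < α + k := fun k => by positivity
  have hF_int : ∀ k, IntegrableOn (F k) (Ioo 0 1) := fun k =>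
    (integrableOn_rpow_mul_one_sub_rpow (hαk k) hρ).const_mul _
  have hF : ∀ k, ∫ u in Ioo 0 1, F k u = C * hyp2F1Coeff a b (α + ρ) k := fun k => by
    rw [integral_const_mul, integral_rpow_mul_one_sub_rpow (hαk k) hρ, hyp2F1Coeff_mul_beta hα hρ]
  have hF_norm : ∀ k, ∫ u in Ioo 0 1, ‖F k u‖ = C * |hyp2F1Coeff a b (α + ρ) k| := fun k => by
    have hB : 0 < Gamma (α + k) * Gamma ρ / Gamma (α + k + ρ) := beta_pos (hαk k) hρ
    calc ∫ u in Ioo 0 1, ‖F k u‖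
        = ∫ u in Ioo 0 1, |hyp2F1Coeff a b α k| * (u ^ (α + k - 1) * (1 - u) ^ (ρ - 1)) :=
          setIntegral_congr_fun measurableSet_Ioo fun u ⟨hu0, hu1⟩ => by
            have : 0 < 1 - u := by linarith
            simp only [F]
            rw [norm_mul, Real.norm_eq_abs, Real.norm_of_nonneg (by positivity)]
      _ = C * |hyp2F1Coeff a b (α + ρ) k| := by
        rw [integral_const_mul, integral_rpow_mul_one_sub_rpow (hαk k) hρ, ← abs_of_pos hB,
          ← abs_mul, hyp2F1Coeff_mul_beta hα hρ, abs_mul, abs_of_pos hC]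
  have hexpand : ∀ u ∈ Ioo (0 : ℝ) 1,
      u ^ (α - 1) * hyp2F1 a b α u * (1 - u) ^ (ρ - 1) = ∑' k, F k u := fun u hu => by
    rw [hyp2F1_eq_tsum, ← tsum_mul_left, ← tsum_mul_right]
    refine tsum_congr fun k => ?_
    simp only [F]
    rw [show α + k - 1 = α - 1 + k by ring, rpow_add hu.1, rpow_natCast]
    ring
  rw [intervalIntegral.integral_of_le zero_le_one, integral_Ioc_eq_integral_Ioo,
    setIntegral_congr_fun measurableSet_Ioo hexpand, ← integral_tsum_of_summable_integral_norm
      hF_int (by simpa only [hF_norm] using (summable_abs_hyp2F1Coeff h).mul_left C),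
    tsum_congr hF, tsum_mul_left, hyp2F1_one_eq_tsum]

lemma saigoI_eq_integral_unitInterval (α β γ : ℝ) (f : ℝ → ℝ) {t : ℝ} (ht : 0 < t) :
    saigoI α β γ f t = t ^ (-β) / Gamma α *
      ∫ u in (0 : ℝ)..1, u ^ (α - 1) * hyp2F1 (α + β) (-γ) α u * f (t * (1 - u)) := by
  have hsub := intervalIntegral.integral_comp_sub_mul (a := 0) (b := 1)
    (fun s => (t - s) ^ (α - 1) * hyp2F1 (α + β) (-γ) α (1 - s / t) * f s) ht.ne' t
  simp only [mul_one, mul_zero, sub_self, sub_zero, smul_eq_mul] at hsub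
  have hint : ∫ s in (0 : ℝ)..t, (t - s) ^ (α - 1) * hyp2F1 (α + β) (-γ) α (1 - s / t) * f s =
      t * t ^ (α - 1) *
        ∫ u in (0 : ℝ)..1, u ^ (α - 1) * hyp2F1 (α + β) (-γ) α u * f (t * (1 - u)) := by
    rw [mul_assoc, ← intervalIntegral.integral_const_mul, ← inv_mul_eq_iff_eq_mul₀ ht.ne', ← hsub]
    refine intervalIntegral.integral_congr fun u hu => ?_
    rw [Set.uIcc_of_le zero_le_one] at hu
    have hu' : 1 - (t - t * u) / t = u := by field_simp; ring
    rw [sub_sub_cancel, mul_rpow ht.le hu.1, hu', mul_one_sub]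
    ring
  rw [saigoI, hint, show -β = -α - β + 1 + (α - 1) by ring, rpow_add ht, rpow_add ht, rpow_one]
  ring

theorem saigo_integral_power (α β γ ρ : ℝ) (hα : 0 < α) (hρ0 : 0 < ρ)
    (hρ : β - γ < ρ) :
    ∀ t : ℝ, 0 < t →
      saigoI α β γ (fun s => s ^ (ρ - 1)) t =
        (Real.Gamma ρ * Real.Gamma (ρ - β + γ) /
          (Real.Gamma (ρ - β) * Real.Gamma (ρ + α + γ))) * t ^ (ρ - β - 1) := by
  intro t ht
  have hpow : ∀ u ∈ Set.uIcc (0 : ℝ) 1,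
      u ^ (α - 1) * hyp2F1 (α + β) (-γ) α u * (t * (1 - u)) ^ (ρ - 1) =
        t ^ (ρ - 1) * (u ^ (α - 1) * hyp2F1 (α + β) (-γ) α u * (1 - u) ^ (ρ - 1)) := by
    intro u hu
    rw [Set.uIcc_of_le zero_le_one] at hu
    rw [mul_rpow ht.le (by linarith [hu.2])]
    ring
  have hGauss := hyp2F1_one_eq_Gamma (a := α + β) (b := -γ) (c := α + ρ) (by positivity)
    (by linarith)
  rw [show α + ρ - (α + β) - -γ = ρ - β + γ by ring, show α + ρ - (α + β) = ρ - β by ring,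
    show α + ρ - -γ = ρ + α + γ by ring] at hGauss
  rw [saigoI_eq_integral_unitInterval _ _ _ _ ht, intervalIntegral.integral_congr hpow,
    intervalIntegral.integral_const_mul,
    integral_rpow_mul_hyp2F1_mul_rpow hα hρ0 (by linarith), hGauss,
    show ρ - β - 1 = -β + (ρ - 1) by ring, rpow_add ht]
  have := Gamma_pos_of_pos hα
  have := Gamma_pos_of_pos (by positivity : 0 < α + ρ)
  field_simp
end

section
/- The Saigo fractional integral operators do not commute in general: there exist real numbers α > 0, η > 0, β, γ, δ, ξ, ρ with ρ > 0 and ρ > max{β-γ, δ-ξ, β-γ+δ, δ-ξ+β}, and a t > 0, such that for the power function f(s) = s^{ρ-1} one has I^{α,β,γ}_t (s ↦ I^{η,δ,ξ}_s f(s)) (t) ≠ I^{η,δ,ξ}_t (s ↦ I^{α,β,γ}_s f(s)) (t). -/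
open Real Finset

lemma hyp2F1_b_zero (a c z : ℝ) : hyp2F1 a 0 c z = 1 := by
  unfold hyp2F1
  rw [tsum_eq_single 0]
  · simp [risingFac]
  · intro k hk
    have h0 : risingFac 0 k = 0 := by
      unfold risingFac
      exact Finset.prod_eq_zero (Finset.mem_range.mpr (Nat.pos_of_ne_zero hk)) (by simp)
    simp [h0]

lemma saigo_simp (β : ℝ) (f : ℝ → ℝ) (t : ℝ) :
    saigoI 1 β 0 f t = t ^ (-1 - β) * ∫ s in (0:ℝ)..t, f s := by
  unfold saigoI
  simp only [neg_zero, hyp2F1_b_zero, sub_self, Real.rpow_zero, one_mul, mul_one,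
    Real.Gamma_one, div_one]

theorem saigo_integrals_do_not_commute :
    ∃ (α η β γ δ ξ ρ t : ℝ), 0 < α ∧ 0 < η ∧ 0 < ρ ∧
      β - γ < ρ ∧ δ - ξ < ρ ∧ β - γ + δ < ρ ∧ δ - ξ + β < ρ ∧ 0 < t ∧
      saigoI α β γ (fun s => saigoI η δ ξ (fun x => x ^ (ρ - 1)) s) t ≠
        saigoI η δ ξ (fun s => saigoI α β γ (fun x => x ^ (ρ - 1)) s) t := by
  refine ⟨1, 1, 0, 0, 1/2, 0, 1, 1, one_pos, one_pos, one_pos, by norm_num, by norm_num,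
    by norm_num, by norm_num, one_pos, ?_⟩
  have hf : (fun x : ℝ => x ^ ((1:ℝ) - 1)) = fun _ : ℝ => (1:ℝ) := by
    funext x
    norm_num
  rw [hf]
  have hconst : ∀ s : ℝ, (∫ _ in (0:ℝ)..s, (1:ℝ)) = s := by
    intro s; simp
  have hA : ∀ s : ℝ, saigoI 1 (1/2) 0 (fun _ : ℝ => (1:ℝ)) s = s ^ (-1 - 1/2 : ℝ) * s := by
    intro s; rw [saigo_simp, hconst]
  have hB : ∀ s : ℝ, saigoI 1 0 0 (fun _ : ℝ => (1:ℝ)) s = s ^ (-1 - 0 : ℝ) * s := by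
    intro s; rw [saigo_simp, hconst]
  rw [saigo_simp, saigo_simp]
  have hL : (∫ s in (0:ℝ)..1, saigoI 1 (1/2) 0 (fun _ : ℝ => (1:ℝ)) s)
      = ∫ s in (0:ℝ)..1, s ^ (-(1:ℝ)/2) := by
    rw [intervalIntegral.integral_congr_ae (g := fun s => s ^ (-(1:ℝ)/2)) ?_]
    filter_upwards with s hs
    have hs0 : 0 < s := by
      rw [Set.uIoc_of_le (by norm_num : (0:ℝ) ≤ 1)] at hs
      exact hs.1
    rw [hA]
    calc s ^ (-1 - 1/2 : ℝ) * s = s ^ (-1 - 1/2 : ℝ) * s ^ (1:ℝ) := by rw [Real.rpow_one]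
      _ = s ^ ((-1 - 1/2) + 1 : ℝ) := (Real.rpow_add hs0 _ _).symm
      _ = s ^ (-(1:ℝ)/2) := by norm_num
  have hR : (∫ s in (0:ℝ)..1, saigoI 1 0 0 (fun _ : ℝ => (1:ℝ)) s)
      = ∫ _ in (0:ℝ)..1, (1:ℝ) := by
    rw [intervalIntegral.integral_congr_ae (g := fun _ => (1:ℝ)) ?_]
    filter_upwards with s hs
    have hs0 : 0 < s := by
      rw [Set.uIoc_of_le (by norm_num : (0:ℝ) ≤ 1)] at hs
      exact hs.1
    rw [hB]
    have : (-1 - 0 : ℝ) = -1 := by norm_num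
    rw [this, Real.rpow_neg_one]
    exact inv_mul_cancel₀ (ne_of_gt hs0)
  rw [hL, hR]
  rw [integral_rpow (Or.inl (by norm_num : (-1:ℝ) < -1/2))]
  rw [hconst 1]
  have : (0:ℝ) ^ ((-(1:ℝ)/2) + 1) = 0 := Real.zero_rpow (by norm_num)
  rw [this, Real.one_rpow]
  norm_num [Real.one_rpow]
end

section
/- Let 0 < α ≤ 1, β < 0, γ ∈ ℝ, 0 < ν ≤ 1 and λ > 0. For every t > 0, the SSTFPP state probabilities sum to one: Σ_{n=0}^∞ p^{α,β,γ}_ν(n,t) = 1. -/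
open Real Finset

/-- Coefficients `C_k = ∏_{j=1}^k Γ(1+γ-jβ)/Γ(1+γ+α-(j-1)β)`. -/
noncomputable def Ccoef (α β γ : ℝ) (k : ℕ) : ℝ :=
  ∏ j ∈ Finset.range k,
    Real.Gamma (1 + γ - ((j : ℝ) + 1) * β) / Real.Gamma (1 + γ + α - (j : ℝ) * β)

/-- State probabilities of the Saigo space and time fractional Poisson process. -/
noncomputable def pSS (α β γ ν lam : ℝ) (n : ℕ) (t : ℝ) : ℝ :=
  ((-1) ^ n / n.factorial) * ∑' k : ℕ,
    Ccoef α β γ k * (-(lam ^ ν) * t ^ (-β)) ^ k / Real.Gamma (1 - (k : ℝ) * β) *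
      (Real.Gamma ((k : ℝ) * ν + 1) / Real.Gamma ((k : ℝ) * ν + 1 - n))

/-!
Since `Γ(s + 1) / Γ(s + 1 - n) = n! (s choose n)` for `s ≥ 0`, the `n`-th probability is
`∑_k a_k (-1)^n (kν choose n)`, where `a_k = C_k (-λ^ν t^{-β})^k / Γ(1 - kβ)` and `a_0 = 1`.
After swapping the two sums, the inner sum is the binomial series of `(1 - 1)^{kν}`, which
vanishes for `k > 0`.

For `s > 0` the partial sums of `∑_n (-1)^n (s choose n)` are `∏_{j<N} (1 - s/(j+1))`, and a
nonzero limit would make `|(s choose n+1)| = s |∏_{j<n} (1 - s/(j+1))| / (n+1)` dominate the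
harmonic series. The swap is justified by `∑_n |(s choose n)| ≤ 2^(m+1)` for `s ≤ m + 1`
(Pascal's rule at most doubles the sum when `s` grows by one; for `s ≤ 1` it telescopes to at
most `2`) and by the ratio test for `∑_k |C_k| R^k / Γ(1 - kβ)`: by log-convexity of `Γ`,
`(x - 1)^d ≤ Γ(x + d) / Γ(x) ≤ (x + d)^d`, so the ratio of consecutive terms is `O(k^{-α})`.
-/

open Filter Topology Asymptotics

theorem Ring.choose_eq_prod_div {K : Type*} [Field K] [CharZero K] (a : K) (n : ℕ) :
    Ring.choose a n = (∏ i ∈ range n, (a - i)) / n.factorial := by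
  rw [Ring.choose_eq_smul, smul_eq_mul, ← Polynomial.aeval_eq_smeval,
    ← descPochhammer_eval_eq_prod_range, Polynomial.aeval_def, Polynomial.eval₂_eq_eval_map,
    descPochhammer_map, inv_mul_eq_div]

theorem Ring.choose_succ_right_eq {K : Type*} [Field K] [CharZero K] (a : K) (n : ℕ) :
    Ring.choose a (n + 1) * (n + 1) = Ring.choose a n * (a - n) := by
  rw [Ring.choose_eq_prod_div, Ring.choose_eq_prod_div, prod_range_succ, Nat.factorial_succ]
  push_cast
  field_simp

section AlternatingBinomialSums

variable (s : ℝ)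

theorem sum_range_succ_neg_one_pow_mul_choose (N : ℕ) :
    ∑ n ∈ range (N + 1), (-1) ^ n * Ring.choose s n = (-1) ^ N * Ring.choose (s - 1) N := by
  induction N with
  | zero => simp
  | succ N ih =>
    have pascal := Ring.choose_succ_succ (s - 1) N
    rw [sub_add_cancel] at pascal
    rw [sum_range_succ, ih, pascal, pow_succ]
    ring

theorem neg_one_pow_mul_choose_sub_one (N : ℕ) :
    (-1) ^ N * Ring.choose (s - 1) N = ∏ j ∈ range N, (1 - s / (j + 1)) := by
  induction N with
  | zero => simp
  | succ N ih =>
    have hN : (N : ℝ) + 1 ≠ 0 := by positivity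
    rw [prod_range_succ, ← ih, ← mul_div_cancel_right₀ (Ring.choose (s - 1) (N + 1)) hN,
      Ring.choose_succ_right_eq]
    field_simp
    ring

theorem neg_one_pow_mul_choose_succ (n : ℕ) :
    (-1) ^ (n + 1) * Ring.choose s (n + 1) =
      -(s / (n + 1)) * ∏ j ∈ range n, (1 - s / (j + 1)) := by
  have h := sum_range_succ_neg_one_pow_mul_choose s (n + 1)
  rw [sum_range_succ, sum_range_succ_neg_one_pow_mul_choose, neg_one_pow_mul_choose_sub_one,
    neg_one_pow_mul_choose_sub_one, prod_range_succ] at h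
  push_cast at h
  linarith

theorem abs_choose_succ (n : ℕ) :
    |Ring.choose s (n + 1)| = |s| / (n + 1) * |∏ j ∈ range n, (1 - s / (j + 1))| := by
  have h := congrArg abs (neg_one_pow_mul_choose_succ s n)
  rwa [abs_mul, abs_neg_one_pow, one_mul, abs_mul, abs_neg, abs_div,
    abs_of_pos (by positivity : (0 : ℝ) < n + 1)] at h

end AlternatingBinomialSums

theorem sum_range_abs_choose_le_two {s : ℝ} (hs₀ : 0 ≤ s) (hs₁ : s ≤ 1) (N : ℕ) :
    ∑ n ∈ range N, |Ring.choose s n| ≤ 2 := by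
  set q : ℕ → ℝ := fun n => ∏ j ∈ range n, (1 - s / (j + 1))
  have hfactor : ∀ j : ℕ, 0 ≤ 1 - s / (j + 1) := fun j => by
    rw [sub_nonneg, div_le_one (by positivity)]
    linarith [(Nat.cast_nonneg j : (0 : ℝ) ≤ j)]
  have hq : ∀ n, 0 ≤ q n := fun n => prod_nonneg fun j _ => hfactor j
  -- for `s ≤ 1` the partial sums decrease, so the terms telescope
  have hterm : ∀ n : ℕ, |Ring.choose s (n + 1)| = q n - q (n + 1) := fun n => by
    rw [abs_choose_succ, abs_of_nonneg hs₀, abs_of_nonneg (hq n)]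
    simp only [q, prod_range_succ]
    ring
  cases N with
  | zero => norm_num
  | succ N =>
    rw [sum_range_succ', sum_congr rfl fun n _ => hterm n, sum_range_sub']
    simp only [q, prod_range_zero, Ring.choose_zero_right, abs_one]
    linarith [hq N]

theorem sum_range_abs_choose_add_one_le (s : ℝ) (N : ℕ) :
    ∑ n ∈ range N, |Ring.choose (s + 1) n| ≤ 2 * ∑ n ∈ range N, |Ring.choose s n| := by
  cases N with
  | zero => simp
  | succ N =>
    have hmono :
        ∑ n ∈ range N, |Ring.choose s n| ≤ ∑ n ∈ range (N + 1), |Ring.choose s n| := by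
      rw [sum_range_succ]
      linarith [abs_nonneg (Ring.choose s N)]
    calc ∑ n ∈ range (N + 1), |Ring.choose (s + 1) n|
        = ∑ n ∈ range N, |Ring.choose s n + Ring.choose s (n + 1)| + 1 := by
          simp only [sum_range_succ', Ring.choose_succ_succ, Ring.choose_zero_right, abs_one]
      _ ≤ ∑ n ∈ range N, (|Ring.choose s n| + |Ring.choose s (n + 1)|) + 1 := by
          gcongr with n
          exact abs_add_le _ _
      _ = ∑ n ∈ range N, |Ring.choose s n| + ∑ n ∈ range (N + 1), |Ring.choose s n| := by
          simp only [sum_add_distrib, sum_range_succ' (fun n => |Ring.choose s n|),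
            Ring.choose_zero_right, abs_one]
          ring
      _ ≤ 2 * ∑ n ∈ range (N + 1), |Ring.choose s n| := by linarith

theorem sum_range_abs_choose_le_two_pow {s : ℝ} (hs : 0 ≤ s) {m : ℕ} (hsm : s ≤ m + 1)
    (N : ℕ) :
    ∑ n ∈ range N, |Ring.choose s n| ≤ 2 ^ (m + 1) := by
  induction m generalizing s with
  | zero => simpa using sum_range_abs_choose_le_two hs (by simpa using hsm) N
  | succ m ih =>
    rcases le_or_gt s 1 with hs₁ | hs₁
    · calc ∑ n ∈ range N, |Ring.choose s n| ≤ 2 := sum_range_abs_choose_le_two hs hs₁ N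
        _ ≤ 2 ^ (m + 1 + 1) := le_self_pow₀ one_le_two (by omega)
    · have h := sum_range_abs_choose_add_one_le (s - 1) N
      rw [sub_add_cancel] at h
      have := ih (s := s - 1) (by linarith) (by push_cast at hsm; linarith)
      rw [pow_succ]
      linarith

theorem summable_abs_choose {s : ℝ} (hs : 0 ≤ s) : Summable fun n => |Ring.choose s n| :=
  summable_of_sum_range_le (fun _ => abs_nonneg _)
    (sum_range_abs_choose_le_two_pow hs (m := ⌈s⌉₊) (by linarith [Nat.le_ceil s]))

theorem tsum_abs_choose_le_two_pow {s : ℝ} (hs : 0 ≤ s) {m : ℕ} (hsm : s ≤ m + 1) :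
    ∑' n, |Ring.choose s n| ≤ 2 ^ (m + 1) :=
  Real.tsum_le_of_sum_range_le (fun _ => abs_nonneg _) (sum_range_abs_choose_le_two_pow hs hsm)

theorem hasSum_neg_one_pow_mul_choose {s : ℝ} (hs : 0 < s) :
    HasSum (fun n => (-1) ^ n * Ring.choose s n) 0 := by
  set q : ℕ → ℝ := fun N => ∏ j ∈ range N, (1 - s / (j + 1))
  set L := ∑' n, (-1) ^ n * Ring.choose s n
  have hsum : Summable fun n => (-1) ^ n * Ring.choose s n :=
    Summable.of_abs (by simpa [abs_mul] using summable_abs_choose hs.le)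
  suffices L = 0 by rw [← this]; exact hsum.hasSum
  have hq : Tendsto q atTop (𝓝 L) := by
    have h := hsum.hasSum.tendsto_sum_nat.comp (tendsto_add_atTop_nat 1)
    simpa [Function.comp_def, sum_range_succ_neg_one_pow_mul_choose,
      neg_one_pow_mul_choose_sub_one] using h
  -- otherwise `|(s choose (n + 1))| = s |q n| / (n + 1)` would dominate the harmonic series
  by_contra hL
  have hLpos : 0 < |L| := abs_pos.2 hL
  have hbig : ∀ᶠ n in atTop, |L| / 2 ≤ |q n| :=
    hq.abs.eventually (eventually_ge_nhds (by linarith))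
  apply Real.not_summable_one_div_natCast
  rw [← summable_nat_add_iff 1]
  refine Summable.of_norm_bounded_eventually
    (((summable_nat_add_iff 1).2 (summable_abs_choose hs.le)).mul_left (2 / (s * |L|))) ?_
  rw [Nat.cofinite_eq_atTop]
  filter_upwards [hbig] with n hn
  calc ‖1 / ((n + 1 : ℕ) : ℝ)‖ = 1 * (1 / (n + 1)) := by
        rw [Real.norm_of_nonneg (by positivity)]; push_cast; ring
    _ ≤ 2 * |q n| / |L| * (1 / (n + 1)) := by
        gcongr
        rw [le_div_iff₀ hLpos]
        linarith
    _ = 2 / (s * |L|) * |Ring.choose s (n + 1)| := by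
        rw [abs_choose_succ, abs_of_pos hs]
        dsimp only [q]
        field_simp

theorem Real.inv_Gamma_eq_self_mul_inv_Gamma_add_one (s : ℝ) :
    (Gamma s)⁻¹ = s * (Gamma (s + 1))⁻¹ := by
  rcases ne_or_eq s 0 with h | rfl
  · rw [Gamma_add_one h, mul_inv, mul_inv_cancel_left₀ h]
  · rw [zero_add, Gamma_zero, inv_zero, zero_mul]

theorem Gamma_add_one_div_Gamma_sub_nat {s : ℝ} (hs : Gamma (s + 1) ≠ 0) (n : ℕ) :
    Gamma (s + 1) / Gamma (s + 1 - n) = ∏ i ∈ range n, (s - i) := by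
  induction n with
  | zero => simp [hs]
  | succ n ih =>
    rw [prod_range_succ, ← ih, div_eq_mul_inv, Real.inv_Gamma_eq_self_mul_inv_Gamma_add_one]
    push_cast
    rw [show s + 1 - (n + 1) + 1 = s + 1 - n by ring]
    ring

theorem log_Gamma_add_one {x : ℝ} (hx : 0 < x) : log (Gamma (x + 1)) = log (Gamma x) + log x := by
  rw [Gamma_add_one hx.ne', log_mul hx.ne' (Gamma_pos_of_pos hx).ne', add_comm]

theorem Gamma_add_div_Gamma_le_rpow {x d : ℝ} (hx : 0 < x) (hd : 0 ≤ d) :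
    Gamma (x + d) / Gamma x ≤ (x + d) ^ d := by
  rcases hd.eq_or_lt with rfl | hd
  · simp [(Gamma_pos_of_pos hx).ne']
  have hxd : 0 < x + d := by linarith
  -- log-convexity: the slope of `log ∘ Γ` on `[x, x + d]` is at most `log (x + d)`, its slope
  -- on `[x + d, x + d + 1]`
  have hslope := convexOn_log_Gamma.slope_mono_adjacent (x := x) (y := x + d) (z := x + d + 1)
    hx (Set.mem_Ioi.2 (by linarith)) (by linarith) (by linarith)
  simp only [Function.comp_apply, log_Gamma_add_one hxd, add_sub_cancel_left, div_one] at hslope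
  rw [div_le_iff₀ hd] at hslope
  rw [div_le_iff₀ (Gamma_pos_of_pos hx), rpow_def_of_pos hxd, ← exp_log (Gamma_pos_of_pos hxd),
    ← exp_log (Gamma_pos_of_pos hx), ← exp_add, exp_le_exp]
  linarith

theorem rpow_le_Gamma_add_div_Gamma {x d : ℝ} (hx : 1 < x) (hd : 0 < d) :
    (x - 1) ^ d ≤ Gamma (x + d) / Gamma x := by
  have hx₀ : 0 < x := by linarith
  have hx₁ : 0 < x - 1 := by linarith
  -- log-convexity: the slope `log (x - 1)` of `log ∘ Γ` on `[x - 1, x]` is at most its slope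
  -- on `[x, x + d]`
  have hslope := convexOn_log_Gamma.slope_mono_adjacent (x := x - 1) (y := x) (z := x + d)
    hx₁ (Set.mem_Ioi.2 (by linarith)) (by linarith) (by linarith)
  have hrec := log_Gamma_add_one hx₁
  rw [sub_add_cancel] at hrec
  simp only [Function.comp_apply, hrec, sub_sub_cancel, div_one, add_sub_cancel_left] at hslope
  rw [le_div_iff₀ hd] at hslope
  rw [le_div_iff₀ (Gamma_pos_of_pos hx₀), rpow_def_of_pos hx₁,
    ← exp_log (Gamma_pos_of_pos (by linarith : 0 < x + d)), ← exp_log (Gamma_pos_of_pos hx₀),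
    ← exp_add, exp_le_exp]
  linarith

theorem isBigO_add_const_rpow (c p : ℝ) :
    (fun x : ℝ => (x + c) ^ p) =O[atTop] fun x => x ^ p := by
  have hpos : (fun x : ℝ => x) =ᶠ[atTop] fun x => max x 0 :=
    (eventually_ge_atTop 0).mono fun x hx => (max_eq_left hx).symm
  have h : (fun x : ℝ => x + c) ~[atTop] fun x => max x 0 :=
    (IsEquivalent.refl.add_isLittleO (isLittleO_const_id_atTop c)).congr_right hpos
  refine (h.rpow (fun x => le_max_right x 0) (r := p)).isBigO.congr' (by rfl) ?_
  filter_upwards [hpos] with x hx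
  rw [Pi.pow_apply, ← hx]

theorem isBigO_Gamma_add_div_Gamma_add (a b : ℝ) :
    (fun x => Gamma (x + a) / Gamma (x + b)) =O[atTop] fun x => x ^ (a - b) := by
  rcases le_or_gt b a with hab | hab
  · refine IsBigO.trans (IsBigO.of_bound 1 ?_) (isBigO_add_const_rpow a (a - b))
    filter_upwards [eventually_gt_atTop (-b)] with x hx
    have h := Gamma_add_div_Gamma_le_rpow (x := x + b) (d := a - b) (by linarith) (by linarith)
    rw [show x + b + (a - b) = x + a by ring] at h
    rw [one_mul, Real.norm_of_nonneg (div_nonneg (Gamma_nonneg_of_nonneg (by linarith))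
      (Gamma_nonneg_of_nonneg (by linarith))), Real.norm_of_nonneg (rpow_nonneg (by linarith) _)]
    exact h
  · refine IsBigO.trans (IsBigO.of_bound 1 ?_) (isBigO_add_const_rpow (a - 1) (a - b))
    filter_upwards [eventually_gt_atTop (1 - a)] with x hx
    have h := rpow_le_Gamma_add_div_Gamma (x := x + a) (d := b - a) (by linarith) (by linarith)
    rw [show x + a + (b - a) = x + b by ring, show x + a - 1 = x + (a - 1) by ring] at h
    have hpos : 0 < (x + (a - 1)) ^ (b - a) := rpow_pos_of_pos (by linarith) _
    rw [one_mul, Real.norm_of_nonneg (div_nonneg (Gamma_nonneg_of_nonneg (by linarith))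
      (Gamma_nonneg_of_nonneg (by linarith))), Real.norm_of_nonneg (rpow_nonneg (by linarith) _),
      show a - b = -(b - a) by ring, rpow_neg (by linarith), ← inv_div]
    exact inv_anti₀ hpos h

theorem tsum_tsum_mul_comm {ι κ : Type*} {a : ι → ℝ} {b : ι → κ → ℝ}
    (hb : ∀ i, Summable fun j => |b i j|) (hab : Summable fun i => |a i| * ∑' j, |b i j|) :
    ∑' j, ∑' i, a i * b i j = ∑' i, a i * ∑' j, b i j := by
  have habs : Summable fun p : ι × κ => |a p.1 * b p.1 p.2| := by
    refine (summable_prod_of_nonneg fun _ => abs_nonneg _).2 ⟨fun i => ?_, ?_⟩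
    · simpa only [abs_mul] using (hb i).mul_left |a i|
    · simpa only [abs_mul, tsum_mul_left] using hab
  have hF := habs.of_abs
  rw [Summable.tsum_comm' (f := fun i j => a i * b i j) hF (fun i => hF.prod_factor i)
    (fun j => hF.prod_symm.prod_factor j)]
  simp only [tsum_mul_left]

theorem Ccoef_succ (α β γ : ℝ) (k : ℕ) :
    Ccoef α β γ (k + 1) =
      Ccoef α β γ k * (Gamma (1 + γ - (k + 1) * β) / Gamma (1 + γ + α - k * β)) :=
  prod_range_succ _ k

theorem summable_norm_Ccoef_mul_pow_div_Gamma {α β : ℝ} (γ : ℝ) (hα : 0 < α) (hβ : β < 0)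
    (y : ℝ) : Summable fun k : ℕ => ‖Ccoef α β γ k * y ^ k / Gamma (1 - k * β)‖ := by
  set f : ℕ → ℝ := fun k => Ccoef α β γ k * y ^ k / Gamma (1 - k * β)
  set r : ℕ → ℝ := fun k => Gamma (1 + γ - (k + 1) * β) / Gamma (1 + γ + α - k * β) *
    (Gamma (1 - k * β) / Gamma (1 - (k + 1) * β))
  have hr : Tendsto r atTop (𝓝 0) := by
    have hO := (isBigO_Gamma_add_div_Gamma_add (1 + γ - β) (1 + γ + α)).mul
      (isBigO_Gamma_add_div_Gamma_add 1 (1 - β))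
    have h0 : Tendsto (fun x : ℝ => x ^ (1 + γ - β - (1 + γ + α)) * x ^ (1 - (1 - β))) atTop
        (𝓝 0) := by
      refine (tendsto_rpow_neg_atTop hα).congr' ?_
      filter_upwards [eventually_gt_atTop 0] with x hx
      rw [← rpow_add hx]
      ring_nf
    have hu : Tendsto (fun k : ℕ => k * -β) atTop atTop :=
      tendsto_natCast_atTop_atTop.atTop_mul_const (neg_pos.2 hβ)
    refine ((hO.trans_tendsto h0).comp hu).congr fun k => ?_
    simp only [Function.comp_apply, r]
    congr 3 <;> ring
  have hstep : ∀ k, f (k + 1) = f k * (y * r k) := fun k => by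
    have hΓ : Gamma (1 - k * β) ≠ 0 :=
      (Gamma_pos_of_pos (by nlinarith [(Nat.cast_nonneg k : (0 : ℝ) ≤ k)])).ne'
    simp only [f, r, Ccoef_succ]
    push_cast
    field_simp
    ring
  have hsmall : ∀ᶠ k in atTop, ‖y * r k‖ ≤ 1 / 2 := by
    have h := (hr.const_mul y).norm
    rw [mul_zero, norm_zero] at h
    exact h.eventually (eventually_le_nhds (by norm_num))
  refine summable_of_ratio_norm_eventually_le (by norm_num : (1 / 2 : ℝ) < 1) ?_
  filter_upwards [hsmall] with k hk
  rw [norm_norm, norm_norm]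
  change ‖f (k + 1)‖ ≤ 1 / 2 * ‖f k‖
  rw [hstep, norm_mul, mul_comm]
  exact mul_le_mul_of_nonneg_right hk (norm_nonneg _)

theorem pSS_eq_tsum_mul_choose (α β γ ν lam : ℝ) (hν : 0 ≤ ν) (n : ℕ) (t : ℝ) :
    pSS α β γ ν lam n t = ∑' k : ℕ, Ccoef α β γ k * (-(lam ^ ν) * t ^ (-β)) ^ k /
      Gamma (1 - k * β) * ((-1) ^ n * Ring.choose (k * ν) n) := by
  rw [pSS, ← tsum_mul_left]
  congr 1 with k
  rw [Gamma_add_one_div_Gamma_sub_nat (Gamma_pos_of_pos (by positivity)).ne',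
    Ring.choose_eq_prod_div]
  ring

theorem summable_norm_Ccoef_mul_tsum_abs_choose {α β ν : ℝ} (γ : ℝ) (hα : 0 < α)
    (hβ : β < 0) (hν : 0 ≤ ν) (y : ℝ) :
    Summable fun k : ℕ =>
      ‖Ccoef α β γ k * y ^ k / Gamma (1 - k * β)‖ * ∑' n, |Ring.choose (k * ν) n| := by
  refine ((summable_norm_Ccoef_mul_pow_div_Gamma γ hα hβ (2 ^ ⌈ν⌉₊ * y)).mul_left 2
    ).of_nonneg_of_le (fun k => by positivity) fun k => ?_
  have hk : (k : ℝ) * ν ≤ (k * ⌈ν⌉₊ : ℕ) + 1 := by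
    push_cast
    nlinarith [Nat.le_ceil ν, (Nat.cast_nonneg k : (0 : ℝ) ≤ k)]
  calc ‖Ccoef α β γ k * y ^ k / Gamma (1 - k * β)‖ * ∑' n, |Ring.choose (k * ν) n|
      ≤ ‖Ccoef α β γ k * y ^ k / Gamma (1 - k * β)‖ * 2 ^ (k * ⌈ν⌉₊ + 1) := by
        gcongr
        exact tsum_abs_choose_le_two_pow (by positivity) hk
    _ = 2 * ‖Ccoef α β γ k * (2 ^ ⌈ν⌉₊ * y) ^ k / Gamma (1 - k * β)‖ := by
        simp only [Real.norm_eq_abs, abs_mul, abs_div, abs_pow, mul_pow, pow_succ, pow_mul]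
        norm_num
        ring

theorem sstfpp_sums_to_one_general (α β γ ν lam : ℝ) (hα0 : 0 < α)
    (hβ : β < 0) (hν0 : 0 < ν) :
    ∀ t : ℝ, 0 < t → (∑' n : ℕ, pSS α β γ ν lam n t) = 1 := by
  intro t _
  set a : ℕ → ℝ := fun k =>
    Ccoef α β γ k * (-(lam ^ ν) * t ^ (-β)) ^ k / Gamma (1 - k * β)
  have hrow : ∀ k : ℕ, Summable fun n => |(-1) ^ n * Ring.choose (k * ν) n| := fun k => by
    simpa only [abs_mul, abs_neg_one_pow, one_mul] using
      summable_abs_choose (by positivity : (0 : ℝ) ≤ k * ν)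
  have hcol : Summable fun k : ℕ => |a k| * ∑' n, |(-1) ^ n * Ring.choose (k * ν) n| := by
    simpa only [Real.norm_eq_abs, abs_mul, abs_neg_one_pow, one_mul] using
      summable_norm_Ccoef_mul_tsum_abs_choose γ hα0 hβ hν0.le (-(lam ^ ν) * t ^ (-β))
  calc ∑' n, pSS α β γ ν lam n t
      = ∑' n, ∑' k, a k * ((-1) ^ n * Ring.choose (k * ν) n) :=
        tsum_congr fun n => pSS_eq_tsum_mul_choose α β γ ν lam hν0.le n t
    _ = ∑' k, a k * ∑' n, (-1) ^ n * Ring.choose (k * ν) n := tsum_tsum_mul_comm hrow hcol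
    _ = 1 := by
        rw [tsum_eq_single 0 fun k hk => by
          rw [(hasSum_neg_one_pow_mul_choose (by positivity)).tsum_eq, mul_zero]]
        simp [a, Ccoef, Ring.choose_zero_ite]

theorem sstfpp_sums_to_one (α β γ ν lam : ℝ) (hα0 : 0 < α) (hα1 : α ≤ 1)
    (hβ : β < 0) (hν0 : 0 < ν) (hν1 : ν ≤ 1) (hlam : 0 < lam) :
    ∀ t : ℝ, 0 < t → (∑' n : ℕ, pSS α β γ ν lam n t) = 1 :=
  sstfpp_sums_to_one_general α β γ ν lam hα0 hβ hν0
end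

section
/- Let 0 < α ≤ 1, 0 < ν ≤ 1 and λ > 0. For every real u with |u| < 1 and every t > 0, the probability generating function of the STFPP is a Mittag-Leffler function: Σ_{n=0}^∞ u^n · p^α_ν(n,t) = E_α(-λ^ν (1-u)^ν t^α), where E_α(x) := Σ_{k=0}^∞ x^k / Γ(kα+1). -/
/-!
Since `Γ(kν+1)/Γ(kν+1-n) = n! · C(kν, n)`, the term `uⁿ p(n,t)` is `Σₖ zₖ C(kν, n) (-u)ⁿ` with
`zₖ = (-λ^ν t^α)ᵏ / Γ(kα+1)`. Summing over `n` first, the binomial series turns this into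
`Σₖ zₖ (1-u)^{kν}`, the Mittag-Leffler series. The interchange is legitimate because
`Σₙ |C(kν, n)| |u|ⁿ ≤ (1-|u|)^{-kν}` and Mittag-Leffler series converge absolutely: log-convexity
of `Γ` gives `Γ(x+1+s) ≥ x^s Γ(x+1)`, so the ratio test applies.
-/

open Real

/-- State probabilities of the space and time fractional Poisson process (STFPP). -/
noncomputable def pSTF (α ν lam : ℝ) (n : ℕ) (t : ℝ) : ℝ :=
  ((-1) ^ n / n.factorial) * ∑' k : ℕ,
    (-(lam ^ ν) * t ^ α) ^ k / Real.Gamma ((k : ℝ) * α + 1) *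
      (Real.Gamma ((k : ℝ) * ν + 1) / Real.Gamma ((k : ℝ) * ν + 1 - n))

/-- Mittag-Leffler function `E_α(x) = Σ_{k=0}^∞ x^k / Γ(kα+1)`. -/
noncomputable def mittagLeffler (α x : ℝ) : ℝ :=
  ∑' k : ℕ, x ^ k / Real.Gamma ((k : ℝ) * α + 1)

open Filter Finset Polynomial

lemma Polynomial.ascPochhammer_eval_eq_prod_range {R : Type*} [CommSemiring R] (n : ℕ) (r : R) :
    (ascPochhammer R n).eval r = ∏ j ∈ range n, (r + j) := by
  induction n with
  | zero => simp
  | succ n ih => rw [ascPochhammer_succ_eval, ih, prod_range_succ]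

section Binomial

variable {K : Type*} [Field K] [CharZero K]

lemma Ring.choose_eq_prod_range_div (a : K) (n : ℕ) :
    Ring.choose a n = (∏ j ∈ range n, (a - j)) / n.factorial := by
  rw [Ring.choose_eq_smul, ← descPochhammer_eval_eq_prod_range, smul_eq_mul, inv_mul_eq_div,
    ← aeval_eq_smeval, aeval_def, eval₂_eq_eval_map, descPochhammer_map]

lemma Ring.multichoose_eq_prod_range_div (a : K) (n : ℕ) :
    Ring.multichoose a n = (∏ j ∈ range n, (a + j)) / n.factorial := by
  rw [eq_div_iff (by exact_mod_cast n.factorial_ne_zero), mul_comm, ← nsmul_eq_mul,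
    Ring.factorial_nsmul_multichoose_eq_ascPochhammer, ascPochhammer_smeval_eq_eval,
    ascPochhammer_eval_eq_prod_range]

end Binomial

namespace Real

lemma abs_choose_le_multichoose_abs (a : ℝ) (n : ℕ) :
    |Ring.choose a n| ≤ Ring.multichoose |a| n := by
  rw [Ring.choose_eq_prod_range_div, Ring.multichoose_eq_prod_range_div, abs_div, abs_prod,
    Nat.abs_cast]
  gcongr with j
  exact (abs_sub _ _).trans_eq (by simp)

lemma hasSum_choose_mul_pow (a : ℝ) {x : ℝ} (hx : |x| < 1) :
    HasSum (fun n ↦ Ring.choose a n * x ^ n) ((1 + x) ^ a) := by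
  have := one_add_rpow_hasFPowerSeriesOnBall_zero (a := a) |>.hasSum
    (y := x) (by simpa [enorm_eq_nnnorm, ← NNReal.coe_lt_coe] using hx)
  simpa [binomialSeries, FormalMultilinearSeries.ofScalars_apply_eq, mul_comm] using this

lemma hasSum_multichoose_mul_pow (a : ℝ) {x : ℝ} (hx : |x| < 1) :
    HasSum (fun n ↦ Ring.multichoose a n * x ^ n) ((1 - x) ^ (-a)) := by
  have := (one_div_one_sub_rpow_hasFPowerSeriesOnBall_zero a).hasSum
    (y := x) (by simpa [enorm_eq_nnnorm, ← NNReal.coe_lt_coe] using hx)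
  simpa [FormalMultilinearSeries.ofScalars_apply_eq, Ring.multichoose_eq, mul_comm,
    rpow_neg (show 0 ≤ 1 - x by linarith [le_abs_self x])] using this

/-- If `x` is a natural number below `n`, then `x + 1 - n` is a pole, where Mathlib's `Gamma` is `0`;
so is the product. -/
lemma Gamma_add_one_div_Gamma_add_one_sub_natCast {x : ℝ} (hx : 0 ≤ x) (n : ℕ) :
    Gamma (x + 1) / Gamma (x + 1 - n) = ∏ j ∈ range n, (x - j) := by
  induction n with
  | zero => simp [(Gamma_pos_of_pos (by linarith : 0 < x + 1)).ne']
  | succ n ih =>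
    rw [Nat.cast_succ, show x + 1 - (n + 1) = x - n by ring]
    by_cases hpole : Gamma (x - n) = 0
    · obtain ⟨m, hm⟩ := (Gamma_eq_zero_iff _).mp hpole
      have hmn : m ≤ n := by exact_mod_cast (show (m : ℝ) ≤ n by linarith)
      rw [hpole, div_zero, eq_comm]
      refine prod_eq_zero (i := n - m) (mem_range.mpr (by omega)) ?_
      rw [Nat.cast_sub hmn]
      linarith
    · have hxn : x - n ≠ 0 := fun h ↦ hpole (h ▸ Gamma_zero)
      rw [prod_range_succ, ← ih, show x + 1 - n = x - n + 1 by ring, Gamma_add_one hxn]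
      field_simp

lemma rpow_mul_Gamma_add_one_le {x s : ℝ} (hx : 0 < x) (hs : 0 < s) :
    x ^ s * Gamma (x + 1) ≤ Gamma (x + 1 + s) := by
  have hslope := convexOn_log_Gamma.slope_mono_adjacent (x := x) (y := x + 1) (z := x + 1 + s)
    hx (by simp; linarith) (by linarith) (by linarith)
  have hstep : log (Gamma (x + 1)) - log (Gamma x) = log x := by
    rw [Gamma_add_one hx.ne', log_mul hx.ne' (Gamma_pos_of_pos hx).ne']
    ring
  simp only [Function.comp_apply, add_sub_cancel_left, div_one, hstep] at hslope
  rw [le_div_iff₀ hs] at hslope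
  rw [rpow_def_of_pos hx, ← exp_log (Gamma_pos_of_pos (by linarith : 0 < x + 1)),
    ← exp_log (Gamma_pos_of_pos (by linarith : 0 < x + 1 + s)), ← exp_add, exp_le_exp]
  linarith

lemma summable_pow_div_Gamma_mul_add_one {α : ℝ} (hα : 0 < α) (y : ℝ) :
    Summable fun k : ℕ ↦ y ^ k / Gamma (k * α + 1) := by
  have hgrowth : Tendsto (fun k : ℕ ↦ ((k : ℝ) * α) ^ α) atTop atTop :=
    (tendsto_rpow_atTop hα).comp (tendsto_natCast_atTop_atTop.atTop_mul_const hα)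
  refine summable_of_ratio_norm_eventually_le (r := 1 / 2) (by norm_num) ?_
  filter_upwards [hgrowth.eventually_ge_atTop (2 * |y|), eventually_ge_atTop 1] with k hk hk1
  have hkα : 0 < (k : ℝ) * α := mul_pos (by exact_mod_cast hk1) hα
  have hΓ := rpow_mul_Gamma_add_one_le hkα hα
  have hΓpos : 0 < Gamma (k * α + 1) := Gamma_pos_of_pos (by linarith)
  rw [Nat.cast_succ, show ((k : ℝ) + 1) * α + 1 = k * α + 1 + α by ring, norm_div, norm_div,
    norm_pow, norm_pow, norm_eq_abs, norm_eq_abs, norm_eq_abs, abs_of_pos hΓpos,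
    abs_of_pos (Gamma_pos_of_pos (by linarith))]
  calc |y| ^ (k + 1) / Gamma (k * α + 1 + α)
      ≤ |y| ^ (k + 1) / ((k * α) ^ α * Gamma (k * α + 1)) := by gcongr
    _ = |y| / (k * α) ^ α * (|y| ^ k / Gamma (k * α + 1)) := by ring
    _ ≤ 1 / 2 * (|y| ^ k / Gamma (k * α + 1)) := by
      gcongr ?_ * _
      rw [div_le_iff₀ (by positivity)]
      linarith

end Real

lemma tsum_comm_of_summable_abs {ι κ : Type*} {f : ι → κ → ℝ}
    (hrow : ∀ i, Summable fun j ↦ |f i j|) (htot : Summable fun i ↦ ∑' j, |f i j|) :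
    ∑' j, ∑' i, f i j = ∑' i, ∑' j, f i j := by
  refine Summable.tsum_comm ?_
  rw [← summable_abs_iff]
  exact (summable_prod_of_nonneg fun _ ↦ abs_nonneg _).mpr ⟨hrow, htot⟩

lemma tsum_tsum_mul_choose_mul_pow {ι : Type*} {a x : ι → ℝ} {u : ℝ} (hu : |u| < 1)
    (ha : Summable fun i ↦ |a i| * (1 - |u|) ^ (-|x i|)) :
    ∑' n : ℕ, ∑' i, a i * (Ring.choose (x i) n * u ^ n) = ∑' i, a i * (1 + u) ^ x i := by
  have hmajorant : ∀ i, HasSum (fun n : ℕ ↦ |a i| * (Ring.multichoose |x i| n * |u| ^ n))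
      (|a i| * (1 - |u|) ^ (-|x i|)) :=
    fun i ↦ (hasSum_multichoose_mul_pow |x i| (by rwa [abs_abs])).mul_left _
  have hle : ∀ i n, |a i * (Ring.choose (x i) n * u ^ n)| ≤
      |a i| * (Ring.multichoose |x i| n * |u| ^ n) := fun i n ↦ by
    rw [abs_mul, abs_mul, abs_pow]
    gcongr
    exact abs_choose_le_multichoose_abs _ _
  have hrow : ∀ i, Summable fun n : ℕ ↦ |a i * (Ring.choose (x i) n * u ^ n)| :=
    fun i ↦ (hmajorant i).summable.of_nonneg_of_le (fun _ ↦ abs_nonneg _) (hle i)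
  rw [tsum_comm_of_summable_abs hrow]
  · exact tsum_congr fun i ↦ by rw [tsum_mul_left, (hasSum_choose_mul_pow (x i) hu).tsum_eq]
  · refine ha.of_nonneg_of_le (fun _ ↦ tsum_nonneg fun _ ↦ abs_nonneg _) fun i ↦ ?_
    rw [← (hmajorant i).tsum_eq]
    exact (hrow i).tsum_le_tsum (hle i) (hmajorant i).summable

lemma pow_mul_pSTF {α ν lam : ℝ} (hν : 0 ≤ ν) (n : ℕ) (t u : ℝ) :
    u ^ n * pSTF α ν lam n t = ∑' k : ℕ, (-(lam ^ ν) * t ^ α) ^ k / Gamma (k * α + 1) *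
      (Ring.choose ((k : ℝ) * ν) n * (-u) ^ n) := by
  have hratio : ∀ k : ℕ, Gamma (k * ν + 1) / Gamma (k * ν + 1 - n) =
      n.factorial * Ring.choose ((k : ℝ) * ν) n := fun k ↦ by
    rw [Gamma_add_one_div_Gamma_add_one_sub_natCast (by positivity),
      Ring.choose_eq_prod_range_div, mul_div_cancel₀ _ (by positivity)]
  simp_rw [pSTF, hratio, ← tsum_mul_left]
  refine tsum_congr fun k ↦ ?_
  rw [neg_pow u]
  field_simp

theorem stfpp_pgf_mittagLeffler_general (α ν lam : ℝ) (hα0 : 0 < α) (hν0 : 0 < ν) :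
    ∀ (u t : ℝ), |u| < 1 → 0 < t →
      (∑' n : ℕ, u ^ n * pSTF α ν lam n t) =
        mittagLeffler α (-(lam ^ ν * (1 - u) ^ ν) * t ^ α) := by
  intro u t hu _
  have h1u : 0 ≤ 1 - u := by linarith [le_abs_self u]
  have hmajorant : Summable fun k : ℕ ↦ |(-(lam ^ ν) * t ^ α) ^ k / Gamma (k * α + 1)| *
      (1 - |-u|) ^ (-|(k : ℝ) * ν|) := by
    convert summable_pow_div_Gamma_mul_add_one hα0
      (|lam ^ ν * t ^ α| * (1 - |u|) ^ (-ν)) using 2 with k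
    rw [abs_neg u, abs_of_nonneg (by positivity : 0 ≤ (k : ℝ) * ν),
      show -((k : ℝ) * ν) = -ν * k by ring, rpow_mul_natCast (by linarith), abs_div,
      abs_of_pos (Gamma_pos_of_pos (by positivity)), abs_pow, neg_mul, abs_neg]
    ring
  rw [tsum_congr (pow_mul_pSTF hν0.le · t u),
    tsum_tsum_mul_choose_mul_pow (by rwa [abs_neg]) hmajorant, mittagLeffler]
  refine tsum_congr fun k ↦ ?_
  rw [← sub_eq_add_neg, mul_comm (k : ℝ) ν, rpow_mul_natCast h1u]
  ring

theorem stfpp_pgf_mittagLeffler (α ν lam : ℝ) (hα0 : 0 < α) (hα1 : α ≤ 1)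
    (hν0 : 0 < ν) (hν1 : ν ≤ 1) (hlam : 0 < lam) :
    ∀ (u t : ℝ), |u| < 1 → 0 < t →
      (∑' n : ℕ, u ^ n * pSTF α ν lam n t) =
        mittagLeffler α (-(lam ^ ν * (1 - u) ^ ν) * t ^ α) :=
  stfpp_pgf_mittagLeffler_general α ν lam hα0 hν0
end

section
/- Let 0 < ν ≤ 1 and λ > 0. For every real u with |u| < 1 and every t > 0, the probability generating function of the SFPP satisfies Σ_{n=0}^∞ u^n · p_ν(n,t) = exp(-λ^ν (1-u)^ν t). -/
/-! Since `Γ(kν + 1) / Γ(kν + 1 - n) = n! · (kν choose n)`, the generating function is the double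
series `∑ₖ (-λ^ν t)^k / k! · ∑ₙ (kν choose n) (-u)^n`. It converges absolutely, because
`|(b choose n)| ≤ |(-b choose n)|` for `b ≥ 0` and `∑ₙ |(-b choose n)| |u|^n = (1 - |u|)^(-b)`.
Summing over `n` first, the inner sum is the binomial series of `(1 - u)^(kν)`, and what remains is
the exponential series of `-λ^ν (1 - u)^ν t`. -/

open Real

open Polynomial Nat

theorem Ring.choose_eq_descPochhammer_eval_div {K : Type*} [Field K] [CharZero K] (x : K)
    (n : ℕ) : Ring.choose x n = (descPochhammer K n).eval x / n ! := by
  rw [Ring.choose_eq_smul, smul_eq_mul, ← aeval_eq_smeval, ← descPochhammer_map (algebraMap ℤ K),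
    aeval_def, eval_map, div_eq_inv_mul]

theorem ascPochhammer_eval_nonneg {S : Type*} [Semiring S] [PartialOrder S] [IsOrderedRing S]
    {b : S} (hb : 0 ≤ b) (n : ℕ) : 0 ≤ (ascPochhammer S n).eval b := by
  induction n with
  | zero => simp
  | succ n ih => rw [ascPochhammer_succ_eval]; positivity

theorem abs_descPochhammer_eval_le_neg {R : Type*} [CommRing R] [LinearOrder R]
    [IsStrictOrderedRing R] {b : R} (hb : 0 ≤ b) (n : ℕ) :
    |(descPochhammer R n).eval b| ≤ |(descPochhammer R n).eval (-b)| := by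
  induction n with
  | zero => simp
  | succ n ih =>
    simp only [descPochhammer_succ_eval, abs_mul]
    refine mul_le_mul ih ?_ (abs_nonneg _) (abs_nonneg _)
    rw [show -b - n = -(b + n) by abel, abs_neg, abs_of_nonneg (by positivity : (0 : R) ≤ b + n),
      abs_sub_le_iff]
    constructor <;> linarith [n.cast_nonneg (α := R)]

section OrderedField

variable {K : Type*} [Field K] [LinearOrder K] [IsStrictOrderedRing K]

theorem Ring.abs_choose_le_abs_choose_neg {b : K} (hb : 0 ≤ b) (n : ℕ) :
    |Ring.choose b n| ≤ |Ring.choose (-b) n| := by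
  simp only [Ring.choose_eq_descPochhammer_eval_div, abs_div, Nat.abs_cast]
  exact div_le_div_of_nonneg_right (abs_descPochhammer_eval_le_neg hb n) (n !).cast_nonneg

theorem Ring.choose_neg_mul_neg_pow_nonneg {b q : K} (hb : 0 ≤ b) (hq : 0 ≤ q) (n : ℕ) :
    0 ≤ Ring.choose (-b) n * (-q) ^ n := by
  have hsign : (-1) ^ n * (descPochhammer K n).eval (-b) = (ascPochhammer K n).eval b := by
    simpa using (ascPochhammer_eval_neg_eq_descPochhammer (R := K) (-b) n).symm
  rw [Ring.choose_eq_descPochhammer_eval_div, neg_pow, div_mul_eq_mul_div, mul_left_comm,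
    ← mul_assoc, hsign]
  have := ascPochhammer_eval_nonneg hb n
  positivity

end OrderedField

theorem Real.Gamma_div_Gamma_sub_natCast {x : ℝ} (hx : Gamma (x + 1) ≠ 0) (n : ℕ) :
    Gamma (x + 1) / Gamma (x + 1 - n) = (descPochhammer ℝ n).eval x := by
  induction n with
  | zero => simp [hx]
  | succ n ih =>
    have hshift : x + 1 - (n + 1 : ℕ) = x - n := by push_cast; ring
    rw [descPochhammer_succ_eval, ← ih, hshift]
    by_cases hxn : x - n = 0
    · -- both sides vanish, the left one because `Gamma 0 = 0` in Mathlib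
      simp [hxn]
    · rw [show x + 1 - n = x - n + 1 by ring, Real.Gamma_add_one hxn]
      field_simp

theorem Real.hasSum_choose_mul_pow_s14 (a : ℝ) {x : ℝ} (hx : |x| < 1) :
    HasSum (fun n ↦ Ring.choose a n * x ^ n) ((1 + x) ^ a) := by
  have := Real.one_add_rpow_hasFPowerSeriesOnBall_zero (a := a) |>.hasSum (y := x)
    (by simpa [enorm_eq_nnnorm, ← NNReal.coe_lt_one] using hx)
  simpa [binomialSeries, FormalMultilinearSeries.ofScalars_apply_eq, mul_comm] using this

theorem Real.hasSum_abs_choose_neg_mul_pow {b q : ℝ} (hb : 0 ≤ b) (hq0 : 0 ≤ q) (hq1 : q < 1) :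
    HasSum (fun n ↦ |Ring.choose (-b) n| * q ^ n) ((1 - q) ^ (-b)) := by
  have h := Real.hasSum_choose_mul_pow_s14 (-b) (x := -q) (by rwa [abs_neg, abs_of_nonneg hq0])
  rw [← sub_eq_add_neg] at h
  convert h using 2 with n
  rw [← abs_of_nonneg (Ring.choose_neg_mul_neg_pow_nonneg hb hq0 n), abs_mul, abs_pow, abs_neg,
    abs_of_nonneg hq0]

theorem summable_pow_div_factorial_mul_choose_mul_pow (c : ℝ) {b u : ℝ} (hb : 0 ≤ b)
    (hu : |u| < 1) :
    Summable (fun p : ℕ × ℕ ↦ c ^ p.1 / p.1 ! * (Ring.choose (p.1 * b) p.2 * u ^ p.2)) := by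
  set G : ℕ × ℕ → ℝ := fun p ↦ |c| ^ p.1 / p.1 ! * (|Ring.choose (-(p.1 * b)) p.2| * |u| ^ p.2)
  have hrow (k : ℕ) : HasSum (fun n ↦ G (k, n)) ((|c| * (1 - |u|) ^ (-b)) ^ k / k !) := by
    have hpow : ((1 - |u|) ^ (-b)) ^ k = (1 - |u|) ^ (-(k * b)) := by
      rw [← Real.rpow_mul_natCast (by linarith)]
      ring_nf
    rw [mul_pow, hpow, mul_div_right_comm]
    exact (Real.hasSum_abs_choose_neg_mul_pow (by positivity) (abs_nonneg u) hu).mul_left _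
  have hG : Summable G := by
    refine (summable_prod_of_nonneg fun p ↦ by positivity).2 ⟨fun k ↦ (hrow k).summable, ?_⟩
    simp_rw [(hrow _).tsum_eq]
    exact Real.summable_pow_div_factorial _
  refine hG.of_norm_bounded fun ⟨k, n⟩ ↦ ?_
  simp only [G, Real.norm_eq_abs, abs_mul, abs_div, abs_pow, Nat.abs_cast]
  gcongr ?_ * (?_ * _)
  exact Ring.abs_choose_le_abs_choose_neg (by positivity) n

theorem pow_mul_pSF_eq_tsum {ν : ℝ} (hν : 0 ≤ ν) (lam t u : ℝ) (n : ℕ) :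
    u ^ n * pSF ν lam n t =
      ∑' k : ℕ, (-(lam ^ ν) * t) ^ k / k ! * (Ring.choose (k * ν) n * (-u) ^ n) := by
  have hratio (k : ℕ) :
      Gamma (k * ν + 1) / Gamma (k * ν + 1 - n) = n ! * Ring.choose (k * ν) n := by
    rw [Real.Gamma_div_Gamma_sub_natCast (Real.Gamma_pos_of_pos (by positivity)).ne',
      Ring.choose_eq_descPochhammer_eval_div, mul_div_cancel₀ _ (by positivity)]
  simp_rw [pSF, hratio, ← mul_assoc, ← tsum_mul_left]
  congr 1 with k
  rw [neg_pow u n]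
  field_simp

theorem sfpp_pgf_exp_general (ν lam : ℝ) (hν0 : 0 < ν) :
    ∀ (u t : ℝ), |u| < 1 → 0 < t →
      (∑' n : ℕ, u ^ n * pSF ν lam n t) = Real.exp (-(lam ^ ν * (1 - u) ^ ν) * t) := by
  intro u t hu _
  have hu' : |-u| < 1 := by rwa [abs_neg]
  have hrow (k : ℕ) : ∑' n : ℕ, (-(lam ^ ν) * t) ^ k / k ! * (Ring.choose (k * ν) n * (-u) ^ n)
      = (-(lam ^ ν * (1 - u) ^ ν) * t) ^ k / k ! := by
    rw [tsum_mul_left, (Real.hasSum_choose_mul_pow_s14 _ hu').tsum_eq, ← sub_eq_add_neg, mul_comm _ ν,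
      Real.rpow_mul_natCast (by linarith [(abs_lt.1 hu).2])]
    ring
  simp_rw [pow_mul_pSF_eq_tsum hν0.le]
  rw [(summable_pow_div_factorial_mul_choose_mul_pow _ hν0.le hu').tsum_comm]
  simp_rw [hrow, Real.exp_eq_exp_ℝ]
  exact (NormedSpace.expSeries_div_hasSum_exp _).tsum_eq

theorem sfpp_pgf_exp (ν lam : ℝ) (hν0 : 0 < ν) (hν1 : ν ≤ 1) (hlam : 0 < lam) :
    ∀ (u t : ℝ), |u| < 1 → 0 < t →
      (∑' n : ℕ, u ^ n * pSF ν lam n t) = Real.exp (-(lam ^ ν * (1 - u) ^ ν) * t) :=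
  sfpp_pgf_exp_general ν lam hν0
end
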